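/- arXiv:2102.03392 — 4 statements merged into one kernel-verified Lean document; each statement's English description precedes it below -/
import Mathlib

section
/- Let P : ℝ² → ℝ be the quadratic polynomial P(x,y) = A·x(x−1)/2 + B·xy + C·y(y−1)/2 + D·x + E·y + F with A,B,C,D,E,F ∈ ℤ and (A,B,C) ≠ (0,0,0). If the discriminant Δ = B² − AC is nonzero, then for every ω₀ ∈ ℝ² and every pair of linearly independent vectors ω₁, ω₂ ∈ ℝ², the restriction of P to the integer lattice points of the affine convex cone C_{ω₀}(ω₁,ω₂) = {u·ω₁ + v·ω₂ + ω₀ : u,v ≥ 0} is not injective; that is, there exist two distinct points of C_{ω₀}(ω₁,ω₂) ∩ ℤ² at which P takes the same value. -/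
private lemma det_ne_zero_of_li (w1 w2 : ℝ × ℝ) (hli : LinearIndependent ℝ ![w1, w2]) :
    w1.1 * w2.2 - w1.2 * w2.1 ≠ 0 := by
  rw [linearIndependent_fin2] at hli
  obtain ⟨h2, h1⟩ := hli
  simp only [Matrix.cons_val_one, Matrix.head_cons, Matrix.cons_val_zero] at h2 h1
  intro hdet
  have hd : w1.1 * w2.2 = w1.2 * w2.1 := by linarith
  by_cases hx : w2.1 = 0
  · by_cases hy : w2.2 = 0
    · exact h2 (Prod.ext hx hy)
    · apply h1 (w1.2 / w2.2)
      have heq : ((w1.2 / w2.2) • w2) = (w1.2 / w2.2 * w2.1, w1.2 / w2.2 * w2.2) := rfl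
      rw [heq]
      have hw11 : w1.1 = 0 := by
        rw [hx, mul_zero] at hd
        rcases mul_eq_zero.1 hd with h | h
        · exact h
        · exact absurd h hy
      refine Prod.ext ?_ ?_
      · simp [hx, hw11]
      · field_simp
  · apply h1 (w1.1 / w2.1)
    have heq : ((w1.1 / w2.1) • w2) = (w1.1 / w2.1 * w2.1, w1.1 / w2.1 * w2.2) := rfl
    rw [heq]
    refine Prod.ext ?_ ?_
    · field_simp
    · field_simp
      linarith [hd]

private lemma exists_unimodular_perp (t1 t2 : ℤ) :
    ∃ s1 s2 r1 r2 : ℤ, s1 * r2 - s2 * r1 = 1 ∧ t1 * r1 + t2 * r2 = 0 := by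
  by_cases h : t1 = 0 ∧ t2 = 0
  · exact ⟨1, 0, 0, 1, by ring, by rw [h.1, h.2]; ring⟩
  · have hg : 0 < Int.gcd t1 t2 := by
      rcases Nat.eq_zero_or_pos (Int.gcd t1 t2) with h0 | h0
      · exact absurd (Int.gcd_eq_zero_iff.1 h0) h
      · exact h0
    obtain ⟨a, b, hab⟩ := Int.isCoprime_iff_gcd_eq_one.2 (Int.gcd_div_gcd_div_gcd hg)
    refine ⟨a, b, -(t2 / Int.gcd t1 t2), t1 / Int.gcd t1 t2, by linear_combination hab, ?_⟩
    have e1 : t2 * (t1 / (Int.gcd t1 t2 : ℤ)) = t2 * t1 / (Int.gcd t1 t2 : ℤ) :=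
      (Int.mul_ediv_assoc t2 (Int.gcd_dvd_left t1 t2)).symm
    have e2 : t1 * (t2 / (Int.gcd t1 t2 : ℤ)) = t1 * t2 / (Int.gcd t1 t2 : ℤ) :=
      (Int.mul_ediv_assoc t1 (Int.gcd_dvd_right t1 t2)).symm
    rw [mul_neg, e1, e2, mul_comm t2 t1]
    ring

set_option maxHeartbeats 1600000 in
private lemma exists_good_v (δ t1 t2 : ℤ) (hδ : δ ≠ 0) (ω₁ ω₂ : ℝ × ℝ)
    (hdω : ω₁.1 * ω₂.2 - ω₁.2 * ω₂.1 ≠ 0) :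
    ∃ v₁ v₂ : ℤ, IsCoprime v₁ v₂ ∧ (2 * δ ∣ t1 * v₁ + t2 * v₂) ∧
      ∃ av bv : ℝ, 0 < av ∧ 0 < bv ∧
        (v₁ : ℝ) = av * ω₁.1 + bv * ω₂.1 ∧ (v₂ : ℝ) = av * ω₁.2 + bv * ω₂.2 := by
  obtain ⟨s1, s2, r1, r2, hdet, hperp⟩ := exists_unimodular_perp t1 t2
  obtain ⟨wb, hwb, hx0⟩ : ∃ wb : ℝ, 1 ≤ wb ∧
      (r2 : ℝ) * (ω₁.1 + wb * ω₂.1) - (r1 : ℝ) * (ω₁.2 + wb * ω₂.2) ≠ 0 := by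
    by_cases h1 : (r2 : ℝ) * (ω₁.1 + 1 * ω₂.1) - (r1 : ℝ) * (ω₁.2 + 1 * ω₂.2) ≠ 0
    · exact ⟨1, le_refl 1, h1⟩
    by_cases h2 : (r2 : ℝ) * (ω₁.1 + 2 * ω₂.1) - (r1 : ℝ) * (ω₁.2 + 2 * ω₂.2) ≠ 0
    · exact ⟨2, one_le_two, h2⟩
    exfalso
    push_neg at h1 h2
    have hA : (r2 : ℝ) * ω₂.1 - (r1 : ℝ) * ω₂.2 = 0 := by linear_combination h2 - h1
    have hB : (r2 : ℝ) * ω₁.1 - (r1 : ℝ) * ω₁.2 = 0 := by linear_combination h1 - hA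
    have hr1 : (r1 : ℝ) = 0 := by
      have h0 : (r1 : ℝ) * (ω₁.1 * ω₂.2 - ω₁.2 * ω₂.1) = 0 := by
        linear_combination (-ω₁.1) * hA + ω₂.1 * hB
      exact (mul_eq_zero.1 h0).resolve_right hdω
    have hr2 : (r2 : ℝ) = 0 := by
      have h0 : (r2 : ℝ) * (ω₁.1 * ω₂.2 - ω₁.2 * ω₂.1) = 0 := by
        linear_combination (-ω₁.2) * hA + ω₂.2 * hB
      exact (mul_eq_zero.1 h0).resolve_right hdω
    have hz1 : r1 = 0 := by exact_mod_cast hr1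
    have hz2 : r2 = 0 := by exact_mod_cast hr2
    rw [hz1, hz2] at hdet
    simp at hdet
  obtain ⟨w1, hw1def⟩ : ∃ w : ℝ, w = ω₁.1 + wb * ω₂.1 := ⟨_, rfl⟩
  obtain ⟨w2, hw2def⟩ : ∃ w : ℝ, w = ω₁.2 + wb * ω₂.2 := ⟨_, rfl⟩
  obtain ⟨x0, hx0def⟩ : ∃ x : ℝ, x = (r2 : ℝ) * w1 - (r1 : ℝ) * w2 := ⟨_, rfl⟩
  obtain ⟨y0, hy0def⟩ : ∃ y : ℝ, y = -(s2 : ℝ) * w1 + (s1 : ℝ) * w2 := ⟨_, rfl⟩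
  rw [← hw1def, ← hw2def, ← hx0def] at hx0
  obtain ⟨n', hn'pos, hn'dvd⟩ : ∃ n : ℕ, 0 < n ∧ 2 * δ ∣ (n : ℤ) :=
    ⟨(2 * δ).natAbs, Int.natAbs_pos.2 (mul_ne_zero two_ne_zero hδ), Int.dvd_natAbs.2 dvd_rfl⟩
  have hn'R : (0 : ℝ) < (n' : ℝ) := by exact_mod_cast hn'pos
  obtain ⟨aρ, haρdef⟩ : ∃ a : ℝ,
      a = ((r1 : ℝ) * ω₂.2 - (r2 : ℝ) * ω₂.1) / (ω₁.1 * ω₂.2 - ω₁.2 * ω₂.1) := ⟨_, rfl⟩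
  obtain ⟨bρ, hbρdef⟩ : ∃ b : ℝ,
      b = (ω₁.1 * (r2 : ℝ) - ω₁.2 * (r1 : ℝ)) / (ω₁.1 * ω₂.2 - ω₁.2 * ω₂.1) := ⟨_, rfl⟩
  obtain ⟨T0, hT0def⟩ : ∃ T : ℝ, T = (2 * (n' : ℝ) + 2) * (|aρ| + |bρ|) + 1 := ⟨_, rfl⟩
  obtain ⟨j, hj⟩ := pow_unbounded_of_one_lt (T0 * |x0| / (n' : ℝ)) (one_lt_two (α := ℝ))
  obtain ⟨sg, hsg, hsgx⟩ : ∃ sg : ℤ, (sg = 1 ∨ sg = -1) ∧ 0 < (sg : ℝ) * x0 := by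
    rcases hx0.lt_or_gt with h | h
    · exact ⟨-1, Or.inr rfl, by push_cast; nlinarith⟩
    · exact ⟨1, Or.inl rfl, by push_cast; nlinarith⟩
  have hsg2 : (sg : ℝ) * (sg : ℝ) = 1 := by rcases hsg with h | h <;> subst h <;> norm_num
  have hsgZ2 : sg * sg = 1 := by rcases hsg with h | h <;> subst h <;> norm_num
  obtain ⟨ξ, hξdef⟩ : ∃ x : ℤ, x = sg * (n' : ℤ) * 2 ^ j := ⟨_, rfl⟩
  obtain ⟨t, htdef⟩ : ∃ t : ℝ, t = (ξ : ℝ) / x0 := ⟨_, rfl⟩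
  have htx0 : t * x0 = (ξ : ℝ) := by rw [htdef]; exact div_mul_cancel₀ _ hx0
  have hξR : (ξ : ℝ) = (sg : ℝ) * (n' : ℝ) * 2 ^ j := by rw [hξdef]; push_cast; ring
  have h2jpos : (0 : ℝ) < 2 ^ j := pow_pos (by norm_num) j
  have hx2 : (0 : ℝ) < x0 ^ 2 := pow_two_pos_of_ne_zero hx0
  have htpos : 0 < t := by
    have h2 : t * x0 ^ 2 = (n' : ℝ) * 2 ^ j * ((sg : ℝ) * x0) := by
      rw [pow_two, ← mul_assoc, htx0, hξR]
      ring
    have hrhs : (0 : ℝ) < (n' : ℝ) * 2 ^ j * ((sg : ℝ) * x0) :=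
      mul_pos (mul_pos hn'R h2jpos) hsgx
    nlinarith [h2, hrhs, hx2]
  have htT0 : T0 < t := by
    have h1 : T0 * |x0| < (n' : ℝ) * 2 ^ j := by
      rw [div_lt_iff₀ hn'R] at hj
      calc T0 * |x0| < 2 ^ j * (n' : ℝ) := hj
        _ = (n' : ℝ) * 2 ^ j := by ring
    have h2 : t * |x0| = (n' : ℝ) * 2 ^ j := by
      have habs : |t * x0| = |(ξ : ℝ)| := by rw [htx0]
      rw [abs_mul, abs_of_pos htpos] at habs
      have hsabs : |(sg : ℝ)| = 1 := by rcases hsg with h | h <;> subst h <;> norm_num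
      rw [habs, hξR, abs_mul, abs_mul, hsabs, abs_of_pos hn'R, abs_of_pos h2jpos]
      ring
    have hx0abs : 0 < |x0| := abs_pos.2 hx0
    nlinarith
  obtain ⟨q, hq1, hq2⟩ : ∃ q : ℤ, (q : ℝ) ≤ (t * y0) / (2 * (n' : ℝ)) ∧
      (t * y0) / (2 * (n' : ℝ)) - 1 < (q : ℝ) :=
    ⟨⌊(t * y0) / (2 * (n' : ℝ))⌋, Int.floor_le _, Int.sub_one_lt_floor _⟩
  obtain ⟨η, hηdef⟩ : ∃ e : ℤ, e = 2 * (n' : ℤ) * q + 1 := ⟨_, rfl⟩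
  obtain ⟨c, hcdef⟩ : ∃ c : ℝ, c = (η : ℝ) - t * y0 := ⟨_, rfl⟩
  have h2nR : (0 : ℝ) < 2 * (n' : ℝ) := by linarith
  have hc : |c| ≤ 2 * (n' : ℝ) + 2 := by
    have hηR : (η : ℝ) = 2 * (n' : ℝ) * (q : ℝ) + 1 := by rw [hηdef]; push_cast; ring
    have e1 := mul_le_mul_of_nonneg_left hq1 h2nR.le
    have e2 := mul_le_mul_of_nonneg_left hq2.le h2nR.le
    have ety : 2 * (n' : ℝ) * ((t * y0) / (2 * (n' : ℝ))) = t * y0 := by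
      rw [mul_comm]; exact div_mul_cancel₀ _ h2nR.ne'
    rw [ety] at e1
    rw [mul_sub, ety, mul_one] at e2
    rw [abs_le]
    constructor
    · rw [hcdef, hηR]; linarith
    · rw [hcdef, hηR]; linarith
  obtain ⟨v₁, hv₁def⟩ : ∃ v : ℤ, v = ξ * s1 + η * r1 := ⟨_, rfl⟩
  obtain ⟨v₂, hv₂def⟩ : ∃ v : ℤ, v = ξ * s2 + η * r2 := ⟨_, rfl⟩
  have hcop2n : IsCoprime (2 * (n' : ℤ)) η := ⟨-q, 1, by rw [hηdef]; ring⟩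
  have hξdvd : ξ ∣ (2 * (n' : ℤ)) ^ (j + 1) := by
    refine ⟨sg * 2 * (n' : ℤ) ^ j, ?_⟩
    rw [hξdef]
    have : (2 * (n' : ℤ)) ^ (j + 1) = 2 ^ (j + 1) * (n' : ℤ) ^ (j + 1) := by rw [mul_pow]
    rw [this]
    have h1 : sg * (n' : ℤ) * 2 ^ j * (sg * 2 * (n' : ℤ) ^ j)
        = (sg * sg) * (2 ^ (j + 1) * (n' : ℤ) ^ (j + 1)) := by ring
    rw [h1, hsgZ2, one_mul]
  have hcopξη : IsCoprime ξ η := IsCoprime.of_isCoprime_of_dvd_left (hcop2n.pow_left) hξdvd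
  have hφv : r2 * v₁ - r1 * v₂ = ξ := by rw [hv₁def, hv₂def]; linear_combination ξ * hdet
  have hψv : -s2 * v₁ + s1 * v₂ = η := by rw [hv₁def, hv₂def]; linear_combination η * hdet
  have hcopv : IsCoprime v₁ v₂ := by
    obtain ⟨a, b, hab⟩ := hcopξη
    exact ⟨a * r2 - b * s2, -(a * r1) + b * s1, by linear_combination a * hφv + b * hψv + hab⟩
  have hdvd : 2 * δ ∣ t1 * v₁ + t2 * v₂ := by
    obtain ⟨k, hk⟩ := hn'dvd
    refine ⟨k * sg * 2 ^ j * (t1 * s1 + t2 * s2), ?_⟩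
    rw [hv₁def, hv₂def, hξdef]
    linear_combination η * hperp + (sg * 2 ^ j * (t1 * s1 + t2 * s2)) * hk
  have hdetR : (s1 : ℝ) * (r2 : ℝ) - (s2 : ℝ) * (r1 : ℝ) = 1 := by exact_mod_cast hdet
  have hw1x : w1 = x0 * (s1 : ℝ) + y0 * (r1 : ℝ) := by
    rw [hx0def, hy0def]; linear_combination (-w1) * hdetR
  have hw2x : w2 = x0 * (s2 : ℝ) + y0 * (r2 : ℝ) := by
    rw [hx0def, hy0def]; linear_combination (-w2) * hdetR
  have hv1R : (v₁ : ℝ) = t * w1 + c * (r1 : ℝ) := by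
    have hcast : (v₁ : ℝ) = (ξ : ℝ) * (s1 : ℝ) + (η : ℝ) * (r1 : ℝ) := by
      rw [hv₁def]; push_cast; ring
    rw [hcast, hw1x, hcdef]
    linear_combination (s1 : ℝ) * htx0.symm
  have hv2R : (v₂ : ℝ) = t * w2 + c * (r2 : ℝ) := by
    have hcast : (v₂ : ℝ) = (ξ : ℝ) * (s2 : ℝ) + (η : ℝ) * (r2 : ℝ) := by
      rw [hv₂def]; push_cast; ring
    rw [hcast, hw2x, hcdef]
    linear_combination (s2 : ℝ) * htx0.symm
  refine ⟨v₁, v₂, hcopv, hdvd, t + c * aρ, t * wb + c * bρ, ?_, ?_, ?_, ?_⟩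
  · have h1 : |c * aρ| ≤ (2 * (n' : ℝ) + 2) * |aρ| := by
      rw [abs_mul]; exact mul_le_mul_of_nonneg_right hc (abs_nonneg _)
    have h2 := neg_abs_le (c * aρ)
    have h3 : (0 : ℝ) ≤ |bρ| := abs_nonneg _
    have h4 : (0 : ℝ) ≤ |aρ| := abs_nonneg _
    have h6 : (0:ℝ) ≤ (2 * (n' : ℝ) + 2) * |bρ| := by positivity
    have h7 : (2 * (n' : ℝ) + 2) * (|aρ| + |bρ|) = (2 * (n' : ℝ) + 2) * |aρ|
        + (2 * (n' : ℝ) + 2) * |bρ| := by ring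
    rw [hT0def] at htT0
    linarith
  · have h1 : |c * bρ| ≤ (2 * (n' : ℝ) + 2) * |bρ| := by
      rw [abs_mul]; exact mul_le_mul_of_nonneg_right hc (abs_nonneg _)
    have h2 := neg_abs_le (c * bρ)
    have h3 : (0 : ℝ) ≤ |bρ| := abs_nonneg _
    have h4 : (0 : ℝ) ≤ |aρ| := abs_nonneg _
    have h5 : t ≤ t * wb := le_mul_of_one_le_right htpos.le hwb
    have h6 : (0:ℝ) ≤ (2 * (n' : ℝ) + 2) * |aρ| := by positivity
    have h7 : (2 * (n' : ℝ) + 2) * (|aρ| + |bρ|) = (2 * (n' : ℝ) + 2) * |aρ|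
        + (2 * (n' : ℝ) + 2) * |bρ| := by ring
    rw [hT0def] at htT0
    linarith
  · have hra : (r1 : ℝ) = aρ * ω₁.1 + bρ * ω₂.1 := by
      rw [haρdef, hbρdef]
      rw [div_mul_eq_mul_div, div_mul_eq_mul_div, ← add_div, eq_div_iff hdω]
      ring
    rw [hv1R, hw1def, hra]
    ring
  · have hrb : (r2 : ℝ) = aρ * ω₁.2 + bρ * ω₂.2 := by
      rw [haρdef, hbρdef]
      rw [div_mul_eq_mul_div, div_mul_eq_mul_div, ← add_div, eq_div_iff hdω]
      ring
    rw [hv2R, hw2def, hrb]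
    ring

set_option maxHeartbeats 1600000 in
/-- An integer-valued quadratic polynomial with nonzero discriminant is not
injective on the integer lattice points of any affine convex cone. -/
theorem quadratic_not_injective_on_affine_cone
    (A B C D E F : ℤ) (hABC : ¬(A = 0 ∧ B = 0 ∧ C = 0))
    (P : ℝ → ℝ → ℝ)
    (hP : ∀ x y : ℝ, P x y =
      (A : ℝ) * (x * (x - 1) / 2) + (B : ℝ) * (x * y) + (C : ℝ) * (y * (y - 1) / 2)
        + (D : ℝ) * x + (E : ℝ) * y + (F : ℝ))
    (hΔ : B ^ 2 - A * C ≠ 0)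
    (ω₀ ω₁ ω₂ : ℝ × ℝ) (hli : LinearIndependent ℝ ![ω₁, ω₂]) :
    ∃ p q : ℤ × ℤ,
      ((p.1 : ℝ), (p.2 : ℝ)) ∈
        {z : ℝ × ℝ | ∃ u v : ℝ, 0 ≤ u ∧ 0 ≤ v ∧ z = u • ω₁ + v • ω₂ + ω₀} ∧
      ((q.1 : ℝ), (q.2 : ℝ)) ∈
        {z : ℝ × ℝ | ∃ u v : ℝ, 0 ≤ u ∧ 0 ≤ v ∧ z = u • ω₁ + v • ω₂ + ω₀} ∧
      p ≠ q ∧ P (p.1 : ℝ) (p.2 : ℝ) = P (q.1 : ℝ) (q.2 : ℝ) := by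
  have hδ : A * C - B * B ≠ 0 := by
    intro h
    apply hΔ
    have : B ^ 2 - A * C = -(A * C - B * B) := by ring
    rw [this, h]; ring
  have hdω : ω₁.1 * ω₂.2 - ω₁.2 * ω₂.1 ≠ 0 := det_ne_zero_of_li ω₁ ω₂ hli
  obtain ⟨v₁, v₂, hcop, hdvd, av, bv, hav, hbv, hv1, hv2⟩ :=
    exists_good_v (A * C - B * B) (A * (2 * E - C) - B * (2 * D - A))
      (B * (2 * E - C) - C * (2 * D - A)) hδ ω₁ ω₂ hdω
  obtain ⟨W, hW⟩ := hdvd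
  obtain ⟨x, y, hxy⟩ : IsCoprime (-v₂) v₁ := hcop.symm.neg_left
  obtain ⟨z01, hz01⟩ : ∃ z : ℤ,
      z = x * (-(A * v₁ ^ 2 + 2 * B * v₁ * v₂ + C * v₂ ^ 2) - W) := ⟨_, rfl⟩
  obtain ⟨z02, hz02⟩ : ∃ z : ℤ,
      z = y * (-(A * v₁ ^ 2 + 2 * B * v₁ * v₂ + C * v₂ ^ 2) - W) := ⟨_, rfl⟩
  have h1 : -v₂ * z01 + v₁ * z02 = -(A * v₁ ^ 2 + 2 * B * v₁ * v₂ + C * v₂ ^ 2) - W := by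
    rw [hz01, hz02]
    linear_combination (-(A * v₁ ^ 2 + 2 * B * v₁ * v₂ + C * v₂ ^ 2) - W) * hxy
  obtain ⟨u₁, hu₁def⟩ : ∃ u : ℤ, u = -2 * (B * v₁ + C * v₂) := ⟨_, rfl⟩
  obtain ⟨u₂, hu₂def⟩ : ∃ u : ℤ, u = 2 * (A * v₁ + B * v₂) := ⟨_, rfl⟩
  have hune : ¬(u₁ = 0 ∧ u₂ = 0) := by
    rintro ⟨e1, e2⟩
    rw [hu₁def] at e1
    rw [hu₂def] at e2
    have hbc : B * v₁ + C * v₂ = 0 := by omega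
    have hab : A * v₁ + B * v₂ = 0 := by omega
    have hv10 : v₁ = 0 := by
      have : (A * C - B * B) * v₁ = C * (A * v₁ + B * v₂) - B * (B * v₁ + C * v₂) := by ring
      rw [hab, hbc] at this
      simp at this
      rcases this with h | h
      · exact absurd h hδ
      · exact h
    have hv20 : v₂ = 0 := by
      have : (A * C - B * B) * v₂ = A * (B * v₁ + C * v₂) - B * (A * v₁ + B * v₂) := by ring
      rw [hab, hbc] at this
      simp at this
      rcases this with h | h
      · exact absurd h hδ
      · exact h
    rw [hv10, hv20] at hcop
    exact not_isCoprime_zero_zero hcop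
  -- real coordinates
  obtain ⟨c1, hc1def⟩ : ∃ c : ℝ,
      c = (((z01 : ℝ) - ω₀.1) * ω₂.2 - ((z02 : ℝ) - ω₀.2) * ω₂.1)
          / (ω₁.1 * ω₂.2 - ω₁.2 * ω₂.1) := ⟨_, rfl⟩
  obtain ⟨c2, hc2def⟩ : ∃ c : ℝ,
      c = (ω₁.1 * ((z02 : ℝ) - ω₀.2) - ω₁.2 * ((z01 : ℝ) - ω₀.1))
          / (ω₁.1 * ω₂.2 - ω₁.2 * ω₂.1) := ⟨_, rfl⟩
  have hz1R : (z01 : ℝ) = ω₀.1 + c1 * ω₁.1 + c2 * ω₂.1 := by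
    rw [hc1def, hc2def]; rw [div_mul_eq_mul_div, div_mul_eq_mul_div, add_assoc, ← add_div, eq_comm, ← eq_sub_iff_add_eq', div_eq_iff hdω]; ring
  have hz2R : (z02 : ℝ) = ω₀.2 + c1 * ω₁.2 + c2 * ω₂.2 := by
    rw [hc1def, hc2def]; rw [div_mul_eq_mul_div, div_mul_eq_mul_div, add_assoc, ← add_div, eq_comm, ← eq_sub_iff_add_eq', div_eq_iff hdω]; ring
  obtain ⟨e1, he1def⟩ : ∃ e : ℝ,
      e = ((u₁ : ℝ) * ω₂.2 - (u₂ : ℝ) * ω₂.1) / (ω₁.1 * ω₂.2 - ω₁.2 * ω₂.1) := ⟨_, rfl⟩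
  obtain ⟨e2, he2def⟩ : ∃ e : ℝ,
      e = (ω₁.1 * (u₂ : ℝ) - ω₁.2 * (u₁ : ℝ)) / (ω₁.1 * ω₂.2 - ω₁.2 * ω₂.1) := ⟨_, rfl⟩
  have hu1R : (u₁ : ℝ) = e1 * ω₁.1 + e2 * ω₂.1 := by
    rw [he1def, he2def]; rw [div_mul_eq_mul_div, div_mul_eq_mul_div, ← add_div, eq_div_iff hdω]; ring
  have hu2R : (u₂ : ℝ) = e1 * ω₁.2 + e2 * ω₂.2 := by
    rw [he1def, he2def]; rw [div_mul_eq_mul_div, div_mul_eq_mul_div, ← add_div, eq_div_iff hdω]; ring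
  obtain ⟨m, hm⟩ := exists_nat_ge ((|c1| + |e1|) / av + (|c2| + |e2|) / bv)
  have hq1 : (0 : ℝ) ≤ (|c1| + |e1|) / av := by positivity
  have hq2 : (0 : ℝ) ≤ (|c2| + |e2|) / bv := by positivity
  have hm1 : |c1| + |e1| ≤ (m : ℝ) * av := by
    have : (|c1| + |e1|) / av ≤ (m : ℝ) := by linarith
    calc |c1| + |e1| = (|c1| + |e1|) / av * av := by field_simp
      _ ≤ (m : ℝ) * av := mul_le_mul_of_nonneg_right this hav.le
  have hm2 : |c2| + |e2| ≤ (m : ℝ) * bv := by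
    have : (|c2| + |e2|) / bv ≤ (m : ℝ) := by linarith
    calc |c2| + |e2| = (|c2| + |e2|) / bv * bv := by field_simp
      _ ≤ (m : ℝ) * bv := mul_le_mul_of_nonneg_right this hbv.le
  have comp : ∀ a b : ℝ, (a • ω₁ + b • ω₂ + ω₀ : ℝ × ℝ)
      = (a * ω₁.1 + b * ω₂.1 + ω₀.1, a * ω₁.2 + b * ω₂.2 + ω₀.2) := fun a b => rfl
  refine ⟨(z01 + (m : ℤ) * v₁, z02 + (m : ℤ) * v₂),
    (z01 + (m : ℤ) * v₁ + u₁, z02 + (m : ℤ) * v₂ + u₂), ?_, ?_, ?_, ?_⟩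
  · refine ⟨c1 + (m : ℝ) * av, c2 + (m : ℝ) * bv, ?_, ?_, ?_⟩
    · have := neg_abs_le c1
      have := abs_nonneg e1
      linarith
    · have := neg_abs_le c2
      have := abs_nonneg e2
      linarith
    · rw [comp]
      have hfst : ((z01 + (m : ℤ) * v₁ : ℤ) : ℝ)
          = (c1 + (m : ℝ) * av) * ω₁.1 + (c2 + (m : ℝ) * bv) * ω₂.1 + ω₀.1 := by
        push_cast
        rw [hz1R, hv1]
        ring
      have hsnd : ((z02 + (m : ℤ) * v₂ : ℤ) : ℝ)
          = (c1 + (m : ℝ) * av) * ω₁.2 + (c2 + (m : ℝ) * bv) * ω₂.2 + ω₀.2 := by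
        push_cast
        rw [hz2R, hv2]
        ring
      exact Prod.ext hfst hsnd
  · refine ⟨c1 + e1 + (m : ℝ) * av, c2 + e2 + (m : ℝ) * bv, ?_, ?_, ?_⟩
    · have := neg_abs_le c1
      have := neg_abs_le e1
      linarith
    · have := neg_abs_le c2
      have := neg_abs_le e2
      linarith
    · rw [comp]
      have hfst : ((z01 + (m : ℤ) * v₁ + u₁ : ℤ) : ℝ)
          = (c1 + e1 + (m : ℝ) * av) * ω₁.1 + (c2 + e2 + (m : ℝ) * bv) * ω₂.1 + ω₀.1 := by
        push_cast
        rw [hz1R, hv1, hu1R]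
        ring
      have hsnd : ((z02 + (m : ℤ) * v₂ + u₂ : ℤ) : ℝ)
          = (c1 + e1 + (m : ℝ) * av) * ω₁.2 + (c2 + e2 + (m : ℝ) * bv) * ω₂.2 + ω₀.2 := by
        push_cast
        rw [hz2R, hv2, hu2R]
        ring
      exact Prod.ext hfst hsnd
  · intro heq
    have hf := congrArg Prod.fst heq
    have hs := congrArg Prod.snd heq
    simp only [] at hf hs
    exact hune ⟨by omega, by omega⟩
  · simp only []
    rw [hP, hP]
    have h1m : -v₂ * (z01 + (m : ℤ) * v₁) + v₁ * (z02 + (m : ℤ) * v₂)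
        = -(A * v₁ ^ 2 + 2 * B * v₁ * v₂ + C * v₂ ^ 2) - W := by linear_combination h1
    have h1R : -(v₂ : ℝ) * ((z01 : ℝ) + (m : ℝ) * (v₁ : ℝ)) + (v₁ : ℝ) * ((z02 : ℝ) + (m : ℝ) * (v₂ : ℝ))
        = -((A : ℝ) * (v₁ : ℝ) ^ 2 + 2 * (B : ℝ) * (v₁ : ℝ) * (v₂ : ℝ) + (C : ℝ) * (v₂ : ℝ) ^ 2) - (W : ℝ) := by
      exact_mod_cast h1m
    have hWR : ((A : ℝ) * (2 * (E : ℝ) - (C : ℝ)) - (B : ℝ) * (2 * (D : ℝ) - (A : ℝ))) * (v₁ : ℝ)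
        + ((B : ℝ) * (2 * (E : ℝ) - (C : ℝ)) - (C : ℝ) * (2 * (D : ℝ) - (A : ℝ))) * (v₂ : ℝ)
        = 2 * ((A : ℝ) * (C : ℝ) - (B : ℝ) * (B : ℝ)) * (W : ℝ) := by
      exact_mod_cast hW
    have huR1 : (u₁ : ℝ) = -2 * ((B : ℝ) * (v₁ : ℝ) + (C : ℝ) * (v₂ : ℝ)) := by
      rw [hu₁def]; push_cast; ring
    have huR2 : (u₂ : ℝ) = 2 * ((A : ℝ) * (v₁ : ℝ) + (B : ℝ) * (v₂ : ℝ)) := by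
      rw [hu₂def]; push_cast; ring
    push_cast
    rw [huR1, huR2]
    linear_combination (-(2 * ((A : ℝ) * (C : ℝ) - (B : ℝ) * (B : ℝ)))) * h1R - hWR
end

section
/- Let P(x,y) = A·x(x−1)/2 + B·xy + C·y(y−1)/2 + D·x + E·y + F with A,B,C,D,E,F ∈ ℤ, and suppose the restriction of P to S(α) ∩ ℤ² is an injection into the non-negative integers, for some α > 0. Then for every integer lattice point (m,n) ∈ S(α) with (m,n) ≠ (0,0), the homogeneous quadratic part P₂(x,y) = (A/2)x² + B·xy + (C/2)y² satisfies P₂(t·m, t·n) > 0 for all real t > 0. -/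
def Tq (A B C D E F x y : ℤ) : ℤ :=
  A*(x*(x-1)) + 2*(B*(x*y)) + C*(y*(y-1)) + 2*(D*x) + 2*(E*y) + 2*F

def pseq (c : ℤ) : ℕ → ℤ
  | 0 => 1
  | i+1 => pseq c i * (1 + c * pseq c i)

lemma pseq_one_le (c : ℤ) (hc : 0 ≤ c) : ∀ i, 1 ≤ pseq c i := by
  intro i; induction i with
  | zero => simp [pseq]
  | succ i ih =>
    simp only [pseq]
    nlinarith [mul_nonneg hc (mul_nonneg (le_trans zero_le_one ih) (le_trans zero_le_one ih))]

lemma pseq_strict (c : ℤ) (hc : 1 ≤ c) : StrictMono (pseq c) := by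
  apply strictMono_nat_of_lt_succ
  intro i
  have h := pseq_one_le c (by omega) i
  simp only [pseq]
  nlinarith [mul_pos (show (0:ℤ) < c by omega) (mul_pos (show (0:ℤ) < pseq c i by omega)
    (show (0:ℤ) < pseq c i by omega))]

lemma pseq_dvd (c : ℤ) : ∀ i i' : ℕ, i < i' → (1 + c * pseq c i) ∣ pseq c i' := by
  intro i i' h
  induction i' with
  | zero => omega
  | succ i' ih =>
    rcases Nat.lt_succ_iff_lt_or_eq.mp h with h' | h'
    · exact dvd_mul_of_dvd_left (ih h') _
    · subst h'; simp only [pseq]; exact dvd_mul_left _ _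

lemma pigeon (σ : ℤ) (hσ : 1 ≤ σ) (g : ℕ → ℤ) :
    ∃ i i' : ℕ, i ≠ i' ∧ σ ∣ g i - g i' := by
  obtain ⟨x, hx, y, hy, hxy, hfeq⟩ :=
    Finset.exists_ne_map_eq_of_card_lt_of_maps_to
      (s := Finset.range (σ.toNat + 1)) (t := Finset.Ico (0:ℤ) σ)
      (f := fun i => g i % σ)
      (by rw [Finset.card_range, Int.card_Ico]; omega)
      (by intro a _
          rw [Finset.mem_coe, Finset.mem_Ico]
          exact ⟨Int.emod_nonneg _ (by omega), Int.emod_lt_of_pos _ (by omega)⟩)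
  exact ⟨y, x, hxy.symm, Int.ModEq.dvd (hfeq : g x % σ = g y % σ)⟩

set_option maxHeartbeats 2000000 in
lemma core (α : ℝ) (hα : 0 < α) (A B C D E F : ℤ)
    (Tnn : ∀ x y : ℤ, 0 ≤ y → (y : ℝ) ≤ α * (x : ℝ) → 0 ≤ Tq A B C D E F x y)
    (Tinj : ∀ x y x' y' : ℤ, 0 ≤ y → (y : ℝ) ≤ α * (x : ℝ) → 0 ≤ y' →
      (y' : ℝ) ≤ α * (x' : ℝ) →
      Tq A B C D E F x y = Tq A B C D E F x' y' → x = x' ∧ y = y')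
    (m n : ℤ) (hm : 1 ≤ m) (hn : 0 ≤ n) (hmn : (n : ℝ) ≤ α * (m : ℝ))
    (hQ : A * m ^ 2 + 2 * B * m * n + C * n ^ 2 = 0) : False := by
  obtain ⟨M, hM⟩ := exists_int_gt (α⁻¹)
  obtain ⟨X, hX⟩ : ∃ _x : ℤ, _x = max (m + 1) M := ⟨_, rfl⟩
  have hXm : m + 1 ≤ X := by rw [hX]; exact le_max_left _ _
  have hXα : 1 ≤ α * (X : ℝ) := by
    have h2 : (M:ℝ) ≤ (X:ℝ) := by
      have : M ≤ X := by rw [hX]; exact le_max_right (m+1) M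
      exact_mod_cast this
    have h3 : α * α⁻¹ = 1 := by field_simp
    nlinarith
  obtain ⟨u, hu⟩ : ∃ _x : ℤ, _x = A * m + B * n := ⟨_, rfl⟩
  obtain ⟨v, hv⟩ : ∃ _x : ℤ, _x = B * m + C * n := ⟨_, rfl⟩
  obtain ⟨L, hL⟩ : ∃ _x : ℤ, _x = 2*D*m + 2*E*n - A*m - C*n := ⟨_, rfl⟩
  obtain ⟨W, hW⟩ : ∃ _x : ℤ, _x = X * u + v := ⟨_, rfl⟩
  have hstep : ∀ x y k : ℤ,
      Tq A B C D E F (x + k*m) (y + k*n) = Tq A B C D E F x y + k * (2*(x*u + y*v) + L) := by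
    intro x y k
    simp only [Tq, hu, hv, hL]
    linear_combination (k^2) * hQ
  have sec_pt : ∀ j k : ℤ, 0 ≤ j → 0 ≤ k →
      0 ≤ j + k * n ∧ ((j + k*n : ℤ) : ℝ) ≤ α * ((j*X + k*m : ℤ) : ℝ) := by
    intro j k hj hk
    refine ⟨add_nonneg hj (mul_nonneg hk hn), ?_⟩
    push_cast
    have hj' : (0:ℝ) ≤ (j:ℝ) := by exact_mod_cast hj
    have hk' : (0:ℝ) ≤ (k:ℝ) := by exact_mod_cast hk
    nlinarith [mul_le_mul_of_nonneg_left hmn hk', mul_le_mul_of_nonneg_left hXα hj']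
  have hpos : ∀ x y : ℤ, 0 ≤ y → (y:ℝ) ≤ α * (x:ℝ) → 1 ≤ 2*(x*u + y*v) + L := by
    intro x y hy hyx
    have hsecK : ∀ k : ℤ, 0 ≤ k →
        0 ≤ y + k*n ∧ ((y + k*n : ℤ):ℝ) ≤ α * ((x + k*m : ℤ):ℝ) := by
      intro k hk
      refine ⟨add_nonneg hy (mul_nonneg hk hn), ?_⟩
      push_cast
      have hk' : (0:ℝ) ≤ (k:ℝ) := by exact_mod_cast hk
      nlinarith [mul_le_mul_of_nonneg_left hmn hk']
    by_contra hcon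
    push_neg at hcon
    have hs0 : 2*(x*u + y*v) + L ≤ 0 := by linarith [Int.lt_iff_add_one_le.mp hcon]
    rcases eq_or_lt_of_le hs0 with h0 | hneg
    · have h1 := hsecK 1 zero_le_one
      have heq : Tq A B C D E F (x + 1*m) (y + 1*n) = Tq A B C D E F x y := by
        rw [hstep x y 1, h0]; ring
      obtain ⟨hx1, -⟩ := Tinj _ _ _ _ h1.1 h1.2 hy hyx heq
      omega
    · have hT0 := Tnn x y hy hyx
      have hk0 : (0:ℤ) ≤ Tq A B C D E F x y + 1 := by omega
      have h2 := Tnn (x + (Tq A B C D E F x y + 1)*m) (y + (Tq A B C D E F x y + 1)*n)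
        (hsecK _ hk0).1 (hsecK _ hk0).2
      rw [hstep x y (Tq A B C D E F x y + 1)] at h2
      nlinarith [mul_nonneg hk0 (show (0:ℤ) ≤ -(2*(x*u + y*v) + L) - 1 + 1 by linarith)]
  have hslope : ∀ j : ℤ, 0 ≤ j → 1 ≤ 2*j*W + L := by
    intro j hj
    have hsec1 : ((j:ℤ):ℝ) ≤ α * ((j*X:ℤ):ℝ) := by
      push_cast
      have hj' : (0:ℝ) ≤ (j:ℝ) := by exact_mod_cast hj
      nlinarith [mul_le_mul_of_nonneg_left hXα hj']
    have h := hpos (j*X) j hj hsec1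
    have e : 2*((j*X)*u + j*v) + L = 2*j*W + L := by rw [hW]; ring
    linarith [h, e]
  have hXn : X * n - m ≠ 0 := by
    intro hcontra
    rcases eq_or_lt_of_le hn with h0 | h1
    · rw [← h0] at hcontra; simp at hcontra; omega
    · have hX2 : (2:ℤ) ≤ X := by omega
      have : m + 1 ≤ X * n := by nlinarith
      linarith
  have collision : ∀ j j' k k' : ℤ, 0 ≤ j → 0 ≤ j' → 0 ≤ k → 0 ≤ k' → j ≠ j' →
      Tq A B C D E F (j*X + k*m) (j + k*n) = Tq A B C D E F (j'*X + k'*m) (j' + k'*n) →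
      False := by
    intro j j' k k' hj hj' hk hk' hne heq
    obtain ⟨h1, h2⟩ := sec_pt j k hj hk
    obtain ⟨h1', h2'⟩ := sec_pt j' k' hj' hk'
    obtain ⟨hx, hy⟩ := Tinj _ _ _ _ h1 h2 h1' h2' heq
    have hj2 : j * (X*n - m) = j' * (X*n - m) := by linear_combination n * hx - m * hy
    exact hne (mul_right_cancel₀ hXn hj2)
  have hline : ∀ j k : ℤ, Tq A B C D E F (j*X + k*m) (j + k*n)
      = Tq A B C D E F (j*X) j + k * (2*j*W + L) := by
    intro j k
    have h := hstep (j*X) j k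
    have e : 2*((j*X)*u + j*v) + L = 2*j*W + L := by rw [hW]; ring
    rw [h, e]
  have hW0 : 0 ≤ W := by
    by_contra hWn
    push_neg at hWn
    have hW1 : W ≤ -1 := by linarith [Int.lt_iff_add_one_le.mp hWn]
    have h := hslope (|L| + 1) (by positivity)
    nlinarith [mul_le_mul_of_nonneg_left hW1 (show (0:ℤ) ≤ |L| + 1 by positivity),
      le_abs_self L, abs_nonneg L]
  rcases eq_or_lt_of_le hW0 with hW1 | hW1
  · -- W = 0 case
    have hLσ : 1 ≤ L := by have := hslope 0 le_rfl; linarith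
    obtain ⟨i, i', hne, hdvd⟩ := pigeon L hLσ (fun i => Tq A B C D E F ((i:ℤ)*X) (i:ℤ))
    obtain ⟨t, ht⟩ := hdvd
    rcases le_or_gt 0 t with h0t | h0t
    · apply collision (i':ℤ) (i:ℤ) t 0 (by positivity) (by positivity) h0t le_rfl
        (by intro h; exact hne (by exact_mod_cast h.symm))
      rw [hline, hline]
      have e1 : 2*(i':ℤ)*W + L = L := by rw [← hW1]; ring
      rw [e1]
      linarith
    · apply collision (i:ℤ) (i':ℤ) (-t) 0 (by positivity) (by positivity)
        (by omega) le_rfl (by intro h; exact hne (by exact_mod_cast h))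
      rw [hline, hline]
      have e1 : 2*(i:ℤ)*W + L = L := by rw [← hW1]; ring
      rw [e1]
      linarith
  · -- W ≥ 1 case
    have hWge : 1 ≤ W := by linarith [Int.lt_iff_add_one_le.mp hW1]
    obtain ⟨σ, hσ⟩ : ∃ _x : ℤ, _x = 2*W + L := ⟨_, rfl⟩
    have hσ1 : 1 ≤ σ := by have := hslope 1 zero_le_one; rw [hσ]; linarith
    obtain ⟨c, hc⟩ : ∃ _x : ℤ, _x = 2*W*σ := ⟨_, rfl⟩
    have hc1 : 1 ≤ c := by rw [hc]; nlinarith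
    have hp1 : ∀ i, 1 ≤ pseq c i := pseq_one_le c (by linarith)
    obtain ⟨a, ha⟩ : ∃ _x : ℕ → ℤ, _x = fun i => 1 + c * pseq c i := ⟨_, rfl⟩
    have ha1 : ∀ i, 1 ≤ a i := by
      intro i; simp only [ha]
      nlinarith [hp1 i]
    obtain ⟨jj, hjj⟩ : ∃ _x : ℕ → ℤ, _x = fun i => 1 + σ^2 * pseq c i := ⟨_, rfl⟩
    have hjj0 : ∀ i, 0 ≤ jj i := by
      intro i; simp only [hjj]
      nlinarith [hp1 i, sq_nonneg σ]
    have hjjinj : ∀ i i' : ℕ, i ≠ i' → jj i ≠ jj i' := by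
      intro i i' hne h
      apply hne
      apply (pseq_strict c hc1).injective
      simp only [hjj] at h
      have h2 : σ^2 * pseq c i = σ^2 * pseq c i' := by linarith
      exact mul_left_cancel₀ (by positivity) h2
    have hsla : ∀ i : ℕ, 2*(jj i)*W + L = σ * a i := by
      intro i; simp only [hjj, ha, hc, hσ]; ring
    have main : ∀ i i' : ℕ, i < i' →
        σ ∣ Tq A B C D E F (jj i * X) (jj i) - Tq A B C D E F (jj i' * X) (jj i') → False := by
      intro i i' hlt hdvd
      obtain ⟨Δ, hΔ⟩ := hdvd
      obtain ⟨e, he⟩ := pseq_dvd c i i' hlt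
      have hrel : a i' = 1 + (c*e) * a i := by
        simp only [ha]; rw [he]; ring
      obtain ⟨t, hT⟩ : ∃ _x : ℤ, _x = |Δ| + |Δ * (c*e)| := ⟨_, rfl⟩
      have ht0 : 0 ≤ t := by rw [hT]; positivity
      obtain ⟨K, hK⟩ : ∃ _x : ℤ, _x = Δ*(c*e) + t * a i' := ⟨_, rfl⟩
      obtain ⟨K', hK'⟩ : ∃ _x : ℤ, _x = Δ + t * a i := ⟨_, rfl⟩
      have hK0 : 0 ≤ K := by
        rw [hK, hT]
        nlinarith [neg_abs_le (Δ*(c*e)), abs_nonneg Δ, abs_nonneg (Δ*(c*e)),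
          mul_le_mul_of_nonneg_left (ha1 i') (show (0:ℤ) ≤ |Δ| + |Δ*(c*e)| by positivity)]
      have hK'0 : 0 ≤ K' := by
        rw [hK', hT]
        nlinarith [neg_abs_le Δ, abs_nonneg Δ, abs_nonneg (Δ*(c*e)),
          mul_le_mul_of_nonneg_left (ha1 i) (show (0:ℤ) ≤ |Δ| + |Δ*(c*e)| by positivity)]
      apply collision (jj i) (jj i') K K' (hjj0 i) (hjj0 i') hK0 hK'0
        (hjjinj i i' (Nat.ne_of_lt hlt))
      rw [hline, hline, hsla i, hsla i']
      rw [hK, hK']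
      linear_combination hΔ - σ*Δ*hrel
    obtain ⟨i, i', hnei, hdvd⟩ := pigeon σ hσ1 (fun i => Tq A B C D E F (jj i * X) (jj i))
    rcases lt_or_gt_of_ne hnei with hlt | hgt
    · exact main i i' hlt hdvd
    · exact main i' i hgt (dvd_sub_comm.mp hdvd)

set_option maxHeartbeats 2000000 in
/-- If the restriction of `P` to the integer lattice points of `S(α)` is an
injection into the non-negative integers, then the homogeneous quadratic part
`P₂` is positive on every ray through a nonzero lattice point of `S(α)`. -/
theorem quadratic_part_pos_on_rays
    (α : ℝ) (hα : 0 < α)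
    (A B C D E F : ℤ)
    (P : ℝ → ℝ → ℝ)
    (hP : ∀ x y : ℝ, P x y =
      (A : ℝ) * (x * (x - 1) / 2) + (B : ℝ) * (x * y) + (C : ℝ) * (y * (y - 1) / 2)
        + (D : ℝ) * x + (E : ℝ) * y + (F : ℝ))
    (hinj : Set.InjOn (fun z : ℝ × ℝ => P z.1 z.2)
        {z : ℝ × ℝ | (0 ≤ z.2 ∧ z.2 ≤ α * z.1) ∧ ∃ m' n' : ℤ, z.1 = m' ∧ z.2 = n'})
    (hmaps : ∀ z : ℝ × ℝ,
        z ∈ {z : ℝ × ℝ | (0 ≤ z.2 ∧ z.2 ≤ α * z.1) ∧ ∃ m' n' : ℤ, z.1 = m' ∧ z.2 = n'} →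
        ∃ k : ℕ, P z.1 z.2 = (k : ℝ))
    (m n : ℤ) (hmn : (m, n) ≠ (0, 0))
    (hsec : 0 ≤ (n : ℝ) ∧ (n : ℝ) ≤ α * (m : ℝ)) :
    ∀ t : ℝ, 0 < t →
      (A : ℝ) / 2 * (t * (m : ℝ)) ^ 2 + (B : ℝ) * (t * (m : ℝ)) * (t * (n : ℝ))
        + (C : ℝ) / 2 * (t * (n : ℝ)) ^ 2 > 0 := by
  intro t ht
  have hn : 0 ≤ n := by exact_mod_cast hsec.1
  have hm : 1 ≤ m := by
    by_contra hmc
    push_neg at hmc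
    have hm0 : m ≤ 0 := by omega
    have hmr : (m:ℝ) ≤ 0 := by exact_mod_cast hm0
    have hnr : (n:ℝ) ≤ 0 := le_trans hsec.2 (by nlinarith)
    have hn0 : n = 0 := le_antisymm (by exact_mod_cast hnr) hn
    have hmge : (0:ℝ) ≤ (m:ℝ) := by
      have h2 := hsec.2
      rw [hn0] at h2
      push_cast at h2
      nlinarith
    have hmeq : m = 0 := le_antisymm hm0 (by exact_mod_cast hmge)
    exact hmn (by rw [hmeq, hn0])
  have Tkey : ∀ x y : ℤ, ((Tq A B C D E F x y : ℤ) : ℝ) = 2 * P (x:ℝ) (y:ℝ) := by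
    intro x y
    rw [hP]
    simp only [Tq]
    push_cast
    ring
  have Tnn : ∀ x y : ℤ, 0 ≤ y → (y:ℝ) ≤ α * (x:ℝ) → 0 ≤ Tq A B C D E F x y := by
    intro x y hy hyx
    obtain ⟨k, hkk⟩ := hmaps ((x:ℝ), (y:ℝ)) ⟨⟨by show (0:ℝ) ≤ (y:ℝ); exact_mod_cast hy, hyx⟩, x, y, rfl, rfl⟩
    have h1 : ((Tq A B C D E F x y : ℤ) : ℝ) = 2 * k := by
      rw [Tkey]
      simp only at hkk
      rw [hkk]
    have h2 : (0:ℝ) ≤ ((Tq A B C D E F x y : ℤ) : ℝ) := by rw [h1]; positivity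
    exact_mod_cast h2
  have Tinj : ∀ x y x' y' : ℤ, 0 ≤ y → (y : ℝ) ≤ α * (x : ℝ) → 0 ≤ y' →
      (y' : ℝ) ≤ α * (x' : ℝ) →
      Tq A B C D E F x y = Tq A B C D E F x' y' → x = x' ∧ y = y' := by
    intro x y x' y' hy hyx hy' hyx' heq
    have hreq : P (x:ℝ) (y:ℝ) = P (x':ℝ) (y':ℝ) := by
      have hc := congrArg (fun z : ℤ => (z:ℝ)) heq
      rw [Tkey, Tkey] at hc
      linarith
    have hpair : ((x:ℝ), (y:ℝ)) = ((x':ℝ), (y':ℝ)) :=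
      hinj ⟨⟨by show (0:ℝ) ≤ (y:ℝ); exact_mod_cast hy, hyx⟩, x, y, rfl, rfl⟩
        ⟨⟨by show (0:ℝ) ≤ (y':ℝ); exact_mod_cast hy', hyx'⟩, x', y', rfl, rfl⟩ hreq
    have h1 : (x:ℝ) = (x':ℝ) := congrArg Prod.fst hpair
    have h2 : (y:ℝ) = (y':ℝ) := congrArg Prod.snd hpair
    exact ⟨by exact_mod_cast h1, by exact_mod_cast h2⟩
  obtain ⟨Q2, hQ2⟩ : ∃ _x : ℤ, _x = A*m^2 + 2*B*m*n + C*n^2 := ⟨_, rfl⟩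
  obtain ⟨L0, hL0⟩ : ∃ _x : ℤ, _x = 2*D*m + 2*E*n - A*m - C*n := ⟨_, rfl⟩
  have hQnn : 0 ≤ Q2 := by
    by_contra hneg
    push_neg at hneg
    have hQ1 : Q2 ≤ -1 := by omega
    obtain ⟨k, hkd⟩ : ∃ _x : ℤ, _x = |L0| + 2*|F| + 1 := ⟨_, rfl⟩
    have hk1 : 1 ≤ k := by rw [hkd]; linarith [abs_nonneg L0, abs_nonneg F]
    have hkn : 0 ≤ k * n := mul_nonneg (by omega) hn
    have hks : ((k*n : ℤ):ℝ) ≤ α * ((k*m : ℤ):ℝ) := by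
      push_cast
      have hk' : (0:ℝ) ≤ (k:ℝ) := by exact_mod_cast (by omega : (0:ℤ) ≤ k)
      nlinarith [mul_le_mul_of_nonneg_left hsec.2 hk']
    have h0 := Tnn (k*m) (k*n) hkn hks
    have hexp : Tq A B C D E F (k*m) (k*n) = k^2*Q2 + k*L0 + 2*F := by
      simp only [Tq, hQ2, hL0]; ring
    rw [hexp] at h0
    have hkabs : k*k = k*|L0| + 2*k*|F| + k := by rw [hkd]; ring
    nlinarith [mul_nonneg (mul_nonneg (by omega : (0:ℤ) ≤ k) (by omega : (0:ℤ) ≤ k))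
        (by omega : (0:ℤ) ≤ -Q2 - 1),
      mul_le_mul_of_nonneg_left (le_abs_self L0) (by omega : (0:ℤ) ≤ k),
      mul_le_mul_of_nonneg_left (le_abs_self F) (by omega : (0:ℤ) ≤ k - 1),
      le_abs_self F, neg_abs_le F, abs_nonneg F, abs_nonneg L0]
  have hQne : Q2 ≠ 0 := by
    intro h
    apply core α hα A B C D E F Tnn Tinj m n hm hn hsec.2
    rw [hQ2] at h
    exact h
  have hQ1 : 1 ≤ Q2 := by omega
  have hQr : (1:ℝ) ≤ (Q2:ℝ) := by exact_mod_cast hQ1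
  have hexpr : (A:ℝ)/2*(t*(m:ℝ))^2 + (B:ℝ)*(t*(m:ℝ))*(t*(n:ℝ)) + (C:ℝ)/2*(t*(n:ℝ))^2
      = t^2 * ((Q2:ℝ)/2) := by
    rw [hQ2]
    push_cast
    ring
  rw [hexpr]
  have ht2 : (0:ℝ) < t^2 := by positivity
  nlinarith
end

section
/- Let P(x,y) = A·x(x−1)/2 + B·xy + C·y(y−1)/2 + D·x + E·y + F with A,B,C,D,E,F ∈ ℤ, and suppose the restriction of P to S(α) ∩ ℤ² is an injection into the non-negative integers, for some α > 0. Then A > 0. -/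
/-- If the restriction of `P` to the integer lattice points of `S(α)` is an
injection into the non-negative integers, then `A > 0`. -/
theorem leading_coefficient_pos
    (α : ℝ) (hα : 0 < α)
    (A B C D E F : ℤ)
    (P : ℝ → ℝ → ℝ)
    (hP : ∀ x y : ℝ, P x y =
      (A : ℝ) * (x * (x - 1) / 2) + (B : ℝ) * (x * y) + (C : ℝ) * (y * (y - 1) / 2)
        + (D : ℝ) * x + (E : ℝ) * y + (F : ℝ))
    (hinj : Set.InjOn (fun z : ℝ × ℝ => P z.1 z.2)
        {z : ℝ × ℝ | (0 ≤ z.2 ∧ z.2 ≤ α * z.1) ∧ ∃ m n : ℤ, z.1 = m ∧ z.2 = n})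
    (hmaps : ∀ z : ℝ × ℝ,
        z ∈ {z : ℝ × ℝ | (0 ≤ z.2 ∧ z.2 ≤ α * z.1) ∧ ∃ m n : ℤ, z.1 = m ∧ z.2 = n} →
        ∃ k : ℕ, P z.1 z.2 = (k : ℝ)) :
    0 < A := by
  by_contra hA
  push_neg at hA
  -- casting halves
  have hhalf : ∀ n : ℤ, ((n * (n - 1) / 2 : ℤ) : ℝ) = (n : ℝ) * ((n : ℝ) - 1) / 2 := by
    intro n
    obtain ⟨k, hk⟩ := Int.even_mul_succ_self (n - 1)
    have h2 : n * (n - 1) = 2 * k := by linear_combination hk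
    have h3 : n * (n - 1) / 2 = k := by rw [h2]; exact Int.mul_ediv_cancel_left k two_ne_zero
    have h4 : (n : ℝ) * ((n : ℝ) - 1) = 2 * (k : ℝ) := by exact_mod_cast h2
    rw [h3]
    linarith
  have hmem : ∀ m n : ℤ, 0 ≤ n → (n : ℝ) ≤ α * m →
      ((m : ℝ), (n : ℝ)) ∈ {z : ℝ × ℝ | (0 ≤ z.2 ∧ z.2 ≤ α * z.1) ∧
        ∃ m n : ℤ, z.1 = m ∧ z.2 = n} := by
    intro m n hn hs
    exact ⟨⟨(by exact_mod_cast hn : (0 : ℝ) ≤ (n : ℝ)), hs⟩, m, n, rfl, rfl⟩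
  have hnnZ : ∀ m n : ℤ, 0 ≤ n → (n : ℝ) ≤ α * m →
      0 ≤ A * (m * (m - 1) / 2) + B * (m * n) + C * (n * (n - 1) / 2)
        + D * m + E * n + F := by
    intro m n hn hs
    obtain ⟨k, hk⟩ := hmaps ((m : ℝ), (n : ℝ)) (hmem m n hn hs)
    rw [hP] at hk
    have hx : (0 : ℝ) ≤ (A : ℝ) * ((m : ℝ) * ((m : ℝ) - 1) / 2) + (B : ℝ) * ((m : ℝ) * (n : ℝ))
        + (C : ℝ) * ((n : ℝ) * ((n : ℝ) - 1) / 2) + (D : ℝ) * (m : ℝ) + (E : ℝ) * (n : ℝ)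
        + (F : ℝ) := by
      rw [hk]; exact Nat.cast_nonneg k
    rw [← hhalf m, ← hhalf n] at hx
    exact_mod_cast hx
  have hreach : ∀ n b : ℤ, ∃ m : ℤ, b ≤ m ∧ (n : ℝ) ≤ α * m := by
    intro n b
    refine ⟨max b ⌈(n : ℝ) / α⌉, le_max_left _ _, ?_⟩
    have h1 : (n : ℝ) / α ≤ (⌈(n : ℝ) / α⌉ : ℤ) := Int.le_ceil _
    have h2 : ((⌈(n : ℝ) / α⌉ : ℤ) : ℝ) ≤ ((max b ⌈(n : ℝ) / α⌉ : ℤ) : ℝ) := by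
      exact_mod_cast le_max_right _ _
    rw [div_le_iff₀ hα] at h1
    nlinarith
  -- A = 0
  have hA0 : A = 0 := by
    rcases hA.lt_or_eq with hlt | heq
    · exfalso
      have hA1 : A ≤ -1 := by omega
      obtain ⟨m, hm, hsec⟩ := hreach 0 (2 * (|D| + |F|) + 3)
      have H := hnnZ m 0 le_rfl hsec
      simp only [mul_zero, zero_mul, add_zero, Int.zero_ediv] at H
      -- H : 0 ≤ A * (m*(m-1)/2) + B*(m*0) + C*(0*(0-1)/2) + D*m + E*0 + F
      obtain ⟨k, hk⟩ := Int.even_mul_succ_self (m - 1)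
      have he : 2 * (m * (m - 1) / 2) = m * (m - 1) := by
        have h2 : m * (m - 1) = 2 * k := by linear_combination hk
        rw [h2, Int.mul_ediv_cancel_left k two_ne_zero]
      have ht : 0 ≤ m * (m - 1) / 2 := by
        have hm3 : 3 ≤ m := by
          have := abs_nonneg D; have := abs_nonneg F; omega
        nlinarith
      have hD1 : D ≤ |D| := le_abs_self D
      have hF1 : F ≤ |F| := le_abs_self F
      have hDa : 0 ≤ |D| := abs_nonneg D
      have hFa : 0 ≤ |F| := abs_nonneg F
      have hAt : (A + 1) * (m * (m - 1) / 2) ≤ 0 :=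
        mul_nonpos_of_nonpos_of_nonneg (by omega) ht
      have hm0 : (0:ℤ) ≤ m := by omega
      nlinarith [mul_nonneg hm0 (by omega : (0:ℤ) ≤ m - 2 * |D| - 2 * |F| - 3),
        mul_nonneg hFa (by omega : (0:ℤ) ≤ m - 1),
        mul_nonneg (sub_nonneg.mpr hD1) hm0]
    · exact heq
  subst hA0
  -- slope claim
  have hslope : ∀ n : ℤ, 0 ≤ n → 1 ≤ B * n + D := by
    intro n hn
    by_contra hs
    push_neg at hs
    rcases (by omega : B * n + D = 0 ∨ B * n + D ≤ -1) with hs0 | hs1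
    · obtain ⟨m, _, hsec⟩ := hreach n 0
      have hsec2 : (n : ℝ) ≤ α * ((m + 1 : ℤ) : ℝ) := by push_cast; nlinarith
      have hs0R : (B : ℝ) * n + D = 0 := by exact_mod_cast hs0
      have e : P ((m : ℤ) : ℝ) ((n : ℤ) : ℝ) = P (((m + 1 : ℤ)) : ℝ) ((n : ℤ) : ℝ) := by
        rw [hP, hP]; push_cast; linear_combination -hs0R
      have hkey := hinj (hmem m n hn hsec) (hmem (m + 1) n hn hsec2) e
      have h1 : ((m : ℤ) : ℝ) = ((m + 1 : ℤ) : ℝ) := congrArg Prod.fst hkey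
      have : m = m + 1 := by exact_mod_cast h1
      omega
    · obtain ⟨m, hm, hsec⟩ := hreach n (|C| * (n * n) + |E| * n + |F| + 1)
      have H := hnnZ m n hn hsec
      have hm0 : 0 ≤ m := by
        have := mul_nonneg (abs_nonneg C) (mul_nonneg hn hn)
        have := mul_nonneg (abs_nonneg E) hn
        have := abs_nonneg F
        omega
      obtain ⟨k, hk⟩ := Int.even_mul_succ_self (n - 1)
      have he : 2 * (n * (n - 1) / 2) = n * (n - 1) := by
        have h2 : n * (n - 1) = 2 * k := by linear_combination hk
        rw [h2, Int.mul_ediv_cancel_left k two_ne_zero]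
      have htn0 : 0 ≤ n * (n - 1) / 2 := Int.ediv_nonneg (by nlinarith) (by norm_num)
      have htn2 : n * (n - 1) / 2 ≤ n * n := by nlinarith
      have hCt : C * (n * (n - 1) / 2) ≤ |C| * (n * n) := by
        calc C * (n * (n - 1) / 2) ≤ |C| * (n * (n - 1) / 2) :=
              mul_le_mul_of_nonneg_right (le_abs_self C) htn0
          _ ≤ |C| * (n * n) := mul_le_mul_of_nonneg_left htn2 (abs_nonneg C)
      have hEn : E * n ≤ |E| * n := mul_le_mul_of_nonneg_right (le_abs_self E) hn
      have hF : F ≤ |F| := le_abs_self F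
      have hsm : (B * n + D) * m ≤ -m := by nlinarith
      have hid : (B * n + D) * m = B * (m * n) + D * m := by ring
      simp only [zero_mul] at H
      linarith
  have hD : 1 ≤ D := by have := hslope 0 le_rfl; omega
  have hB : 0 ≤ B := by
    by_contra hB'
    push_neg at hB'
    have hB1 : B ≤ -1 := by omega
    have := hslope D (by omega)
    nlinarith
  -- collision
  set q : ℤ := C * (2 * D - 1) + 2 * E with hq
  obtain ⟨m₂, hm₂, hsec₂⟩ := hreach (2 * D) (|q| + 1)
  have hm₂0 : 0 ≤ m₂ := by have := abs_nonneg q; omega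
  set m₁ : ℤ := (2 * B + 1) * m₂ + q with hm₁
  have hm₁0 : 0 ≤ m₁ := by
    have h1 : |q| + q ≥ 0 := by have := neg_abs_le q; omega
    nlinarith
  have hsec₁ : ((0 : ℤ) : ℝ) ≤ α * (m₁ : ℝ) := by
    have : (0 : ℝ) ≤ (m₁ : ℝ) := by exact_mod_cast hm₁0
    push_cast
    positivity
  have e : P ((m₁ : ℤ) : ℝ) (((0 : ℤ)) : ℝ) = P ((m₂ : ℤ) : ℝ) (((2 * D : ℤ)) : ℝ) := by
    rw [hP, hP, hm₁, hq]
    push_cast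
    ring
  have hkey := hinj (hmem m₁ 0 le_rfl hsec₁) (hmem m₂ (2 * D) (by omega) hsec₂) e
  have h2 : (((0 : ℤ)) : ℝ) = (((2 * D : ℤ)) : ℝ) := congrArg Prod.snd hkey
  have : (0 : ℤ) = 2 * D := by exact_mod_cast h2
  omega
end

section
/- If P is a quadratic packing polynomial on the sector S(α) for some α > 0, then for every non-negative integer n the region R_n = {(x,y) ∈ S(α) : 0 ≤ P(x,y) ≤ n} is a bounded subset of ℝ². -/
open MvPolynomial Finset

private noncomputable def mono2 (i j : ℕ) : Fin 2 →₀ ℕ := Finsupp.single 0 i + Finsupp.single 1 j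

private lemma mono2_apply0 (i j : ℕ) : mono2 i j 0 = i := by
  simp [mono2, Finsupp.single_apply]

private lemma mono2_apply1 (i j : ℕ) : mono2 i j 1 = j := by
  simp [mono2, Finsupp.single_apply]

private lemma eq_mono2 (s : Fin 2 →₀ ℕ) : s = mono2 (s 0) (s 1) := by
  ext i
  fin_cases i
  · simp [mono2_apply0]
  · simp [mono2_apply1]

private lemma mono2_inj {i j i' j' : ℕ} (h : mono2 i j = mono2 i' j') : i = i' ∧ j = j' := by
  constructor
  · have := DFunLike.congr_fun h (0 : Fin 2)
    simpa [mono2_apply0] using this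
  · have := DFunLike.congr_fun h (1 : Fin 2)
    simpa [mono2_apply1] using this

private lemma mono2_ne {i j i' j' : ℕ} (h : ¬(i = i' ∧ j = j')) : mono2 i j ≠ mono2 i' j' :=
  fun he => h (mono2_inj he)

private lemma sum_eq (s : Fin 2 →₀ ℕ) : (s.sum fun _ e => e) = s 0 + s 1 := by
  rw [Finsupp.sum_fintype]
  · simp [Fin.sum_univ_two]
  · intro i; rfl

private lemma prod_eq (x y : ℝ) (i j : ℕ) :
    (∏ k ∈ (mono2 i j).support, (![x,y] k) ^ (mono2 i j k)) = x ^ i * y ^ j := by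
  rw [Finset.prod_subset (Finset.subset_univ _) (fun k _ hk => by
    simp [Finsupp.notMem_support_iff.mp hk]), Fin.prod_univ_two]
  simp [mono2_apply0, mono2_apply1]

private lemma quad_eval (P : MvPolynomial (Fin 2) ℝ) (h : P.totalDegree ≤ 2) (x y : ℝ) :
    MvPolynomial.eval ![x,y] P =
      P.coeff (mono2 2 0) * x^2 + P.coeff (mono2 1 1) * (x*y) + P.coeff (mono2 0 2) * y^2
      + P.coeff (mono2 1 0) * x + P.coeff (mono2 0 1) * y + P.coeff (mono2 0 0) := by
  have hsub : P.support ⊆ ({mono2 0 0, mono2 1 0, mono2 0 1, mono2 2 0, mono2 1 1, mono2 0 2} : Finset (Fin 2 →₀ ℕ)) := by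
    intro s hs
    have hd : (s.sum fun _ e => e) ≤ 2 := le_trans (MvPolynomial.le_totalDegree hs) h
    rw [sum_eq] at hd
    have h0 : s 0 ≤ 2 := by omega
    have h1 : s 1 ≤ 2 := by omega
    have hse := eq_mono2 s
    simp only [Finset.mem_insert, Finset.mem_singleton]
    interval_cases h2 : (s 0) <;> interval_cases h3 : (s 1) <;> simp_all
  rw [MvPolynomial.eval_eq, Finset.sum_subset hsub (fun s _ hs => by
    rw [MvPolynomial.notMem_support_iff.mp hs]; ring)]
  rw [show ({mono2 0 0, mono2 1 0, mono2 0 1, mono2 2 0, mono2 1 1, mono2 0 2} : Finset (Fin 2 →₀ ℕ))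
      = insert (mono2 0 0) (insert (mono2 1 0) (insert (mono2 0 1) (insert (mono2 2 0)
        (insert (mono2 1 1) ({mono2 0 2} : Finset (Fin 2 →₀ ℕ)))))) from rfl]
  rw [Finset.sum_insert (by
      simp only [Finset.mem_insert, Finset.mem_singleton]
      push_neg
      exact ⟨mono2_ne (by omega), mono2_ne (by omega), mono2_ne (by omega), mono2_ne (by omega), mono2_ne (by omega)⟩),
    Finset.sum_insert (by
      simp only [Finset.mem_insert, Finset.mem_singleton]
      push_neg
      exact ⟨mono2_ne (by omega), mono2_ne (by omega), mono2_ne (by omega), mono2_ne (by omega)⟩),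
    Finset.sum_insert (by
      simp only [Finset.mem_insert, Finset.mem_singleton]
      push_neg
      exact ⟨mono2_ne (by omega), mono2_ne (by omega), mono2_ne (by omega)⟩),
    Finset.sum_insert (by
      simp only [Finset.mem_insert, Finset.mem_singleton]
      push_neg
      exact ⟨mono2_ne (by omega), mono2_ne (by omega)⟩),
    Finset.sum_insert (by
      simp only [Finset.mem_singleton]
      exact mono2_ne (by omega)),
    Finset.sum_singleton]
  rw [prod_eq, prod_eq, prod_eq, prod_eq, prod_eq, prod_eq]
  ring

private lemma quad_nonzero (P : MvPolynomial (Fin 2) ℝ) (h : P.totalDegree = 2) :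
    ¬(P.coeff (mono2 2 0) = 0 ∧ P.coeff (mono2 1 1) = 0 ∧ P.coeff (mono2 0 2) = 0) := by
  rintro ⟨h20, h11, h02⟩
  have hle : P.totalDegree ≤ 1 := by
    rw [MvPolynomial.totalDegree]
    apply Finset.sup_le
    intro s hs
    have hd : (s.sum fun _ e => e) ≤ 2 :=
      le_trans (MvPolynomial.le_totalDegree hs) (le_of_eq h)
    rw [sum_eq] at hd ⊢
    by_contra hlt
    push_neg at hlt
    have hne := MvPolynomial.mem_support_iff.mp hs
    have hse := eq_mono2 s
    have h0 : s 0 ≤ 2 := by omega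
    have h1 : s 1 ≤ 2 := by omega
    interval_cases h2 : (s 0) <;> interval_cases h3 : (s 1) <;> simp_all
  omega
private lemma count_lemma (f : ℝ × ℝ → ℝ) (Dom : Set (ℝ × ℝ))
    (hmap : ∀ z ∈ Dom, ∃ k : ℕ, f z = k) (hinj : Set.InjOn f Dom)
    (S : Finset (ℝ × ℝ)) (N : ℕ) (hS : ∀ z ∈ S, z ∈ Dom ∧ f z ≤ N) :
    S.card ≤ N + 1 := by
  classical
  set ν : ℝ × ℝ → ℕ := fun z => if h : ∃ k : ℕ, f z = k then h.choose else 0 with hν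
  have hνval : ∀ z ∈ Dom, (ν z : ℝ) = f z := by
    intro z hz
    have h := hmap z hz
    simp only [hν, dif_pos h]
    exact h.choose_spec.symm
  have hcard : S.card ≤ (Finset.range (N+1)).card := by
    apply Finset.card_le_card_of_injOn ν
    · intro z hz
      obtain ⟨hzD, hzN⟩ := hS z hz
      have h1 : (ν z : ℝ) ≤ N := by rw [hνval z hzD]; exact hzN
      have h2 : ν z ≤ N := by exact_mod_cast h1
      simpa [Finset.mem_range] using Nat.lt_succ_of_le h2
    · intro z hz z' hz' he
      apply hinj (hS z hz).1 (hS z' hz').1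
      rw [← hνval z (hS z hz).1, ← hνval z' (hS z' hz').1, he]
  simpa using hcard

set_option maxHeartbeats 2000000 in
private lemma core_s11 (f : ℝ × ℝ → ℝ) (Dom : Set (ℝ × ℝ))
    (hmap : ∀ z ∈ Dom, ∃ k : ℕ, f z = k) (hinj : Set.InjOn f Dom)
    (K c' e' L g γ : ℝ) (hγ : 0 < γ) (hL : L ≤ 0)
    (pts : ℕ → ℕ → ℝ × ℝ) (w : ℕ → ℕ → ℝ)
    (hw : ∀ m j : ℕ, (j : ℝ) ≤ w m j ∧ w m j ≤ (j : ℝ) + 1)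
    (hdom : ∀ m j : ℕ, ((j : ℝ) + 2) ≤ γ * m → pts m j ∈ Dom)
    (hFval : ∀ m j : ℕ, f (pts m j) =
        K * m * w m j + c' * (w m j)^2 + L * m + e' * w m j + g)
    (hptsinj : ∀ m j m' j' : ℕ, pts m j = pts m' j' → m = m' ∧ j = j') : False := by
  have hwnn : ∀ m j : ℕ, 0 ≤ w m j := fun m j =>
    le_trans (by positivity) (hw m j).1
  rcases le_or_gt K 0 with hK | hK
  · -- K ≤ 0 : bounded values, pigeonhole
    set G : ℝ := 4*|c'| + 2*|e'| + |g| with hGdef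
    have hG0 : 0 ≤ G := by positivity
    set NG : ℕ := ⌈G⌉₊ with hNG
    set m₁ : ℕ := max 1 ⌈3/γ⌉₊ with hm₁def
    have hm₁ : ∀ m : ℕ, m₁ ≤ m → ((1:ℝ) + 2) ≤ γ * m := by
      intro m hm
      have h1 : (3/γ : ℝ) ≤ m₁ := le_trans (Nat.le_ceil _)
        (by exact_mod_cast Nat.le_max_right 1 ⌈3/γ⌉₊)
      have h2 : (3/γ : ℝ) ≤ m := le_trans h1 (by exact_mod_cast hm)
      have := (div_le_iff₀ hγ).mp h2
      linarith
    set S : Finset (ℝ × ℝ) := (Finset.Icc m₁ (m₁ + NG + 1)).image (fun m => pts m 1) with hSdef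
    have hcard : S.card = NG + 2 := by
      rw [hSdef, Finset.card_image_of_injOn, Nat.card_Icc]
      · omega
      · intro a _ b _ he
        exact (hptsinj _ _ _ _ he).1
    have hle := count_lemma f Dom hmap hinj S NG (by
      intro z hz
      obtain ⟨m, hm, rfl⟩ := Finset.mem_image.mp hz
      have hmm₁ : m₁ ≤ m := (Finset.mem_Icc.mp hm).1
      have hdm := hdom m 1 (by push_cast; exact hm₁ m hmm₁)
      refine ⟨hdm, ?_⟩
      have hw1 := (hw m 1).1
      have hw2 : w m 1 ≤ 2 := by
        have := (hw m 1).2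
        push_cast at this
        linarith
      have hwn : 0 ≤ w m 1 := hwnn m 1
      have hmn : (0:ℝ) ≤ m := Nat.cast_nonneg m
      rw [hFval]
      have t1 : K * m * w m 1 ≤ 0 :=
        mul_nonpos_of_nonpos_of_nonneg (mul_nonpos_of_nonpos_of_nonneg hK hmn) hwn
      have hwsq : (w m 1)^2 ≤ 4 := by nlinarith
      have t2 : c' * (w m 1)^2 ≤ |c'| * 4 := by
        nlinarith [le_abs_self c', abs_nonneg c', sq_nonneg (w m 1)]
      have t3 : L * m ≤ 0 := mul_nonpos_of_nonpos_of_nonneg hL hmn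
      have t4 : e' * w m 1 ≤ |e'| * 2 := by
        nlinarith [le_abs_self e', abs_nonneg e']
      have t5 : g ≤ |g| := le_abs_self g
      have hfG : K * m * w m 1 + c' * (w m 1)^2 + L * m + e' * w m 1 + g ≤ G := by
        rw [hGdef]; linarith
      exact le_trans hfG (Nat.le_ceil G))
    omega
  · -- K > 0 : dyadic counting
    obtain ⟨K', hK'1, hKK'⟩ : ∃ K' : ℕ, 1 ≤ K' ∧ K ≤ (K' : ℝ) :=
      ⟨⌈K⌉₊, Nat.one_le_iff_ne_zero.mpr (by simp only [ne_eq, Nat.ceil_eq_zero, not_le]; exact hK),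
        Nat.le_ceil K⟩
    obtain ⟨u, hγu, hcu, heu, hgu⟩ : ∃ u : ℕ,
        (2/γ : ℝ) ≤ 2^u ∧ |c'| ≤ (2:ℝ)^u ∧ |e'| ≤ (2:ℝ)^u ∧ |g| ≤ (2:ℝ)^u := by
      refine ⟨⌈2/γ⌉₊ + ⌈|c'|⌉₊ + ⌈|e'|⌉₊ + ⌈|g|⌉₊, ?_, ?_, ?_, ?_⟩ <;>
      · set v : ℕ := ⌈2/γ⌉₊ + ⌈|c'|⌉₊ + ⌈|e'|⌉₊ + ⌈|g|⌉₊ with hv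
        have hlt : v < 2^v := Nat.lt_two_pow_self (n := v)
        have hceil : (⌈2/γ⌉₊ : ℕ) ≤ v ∧ (⌈|c'|⌉₊ : ℕ) ≤ v ∧ (⌈|e'|⌉₊ : ℕ) ≤ v ∧ (⌈|g|⌉₊ : ℕ) ≤ v := by
          omega
        have hcast : ∀ q : ℕ, q ≤ v → (q : ℝ) ≤ (2:ℝ)^v := by
          intro q hq
          have : (q:ℕ) ≤ 2^v := by omega
          exact_mod_cast this
        first
        | exact le_trans (Nat.le_ceil _) (hcast _ hceil.1)
        | exact le_trans (Nat.le_ceil _) (hcast _ hceil.2.1)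
        | exact le_trans (Nat.le_ceil _) (hcast _ hceil.2.2.1)
        | exact le_trans (Nat.le_ceil _) (hcast _ hceil.2.2.2)
    obtain ⟨I, t, s, N, hI16, hts, hst, hN⟩ :
        ∃ I t s N : ℕ, I = 16*(K'+1) ∧ t = I ∧ s = t + u ∧ N = K' * 2^(s+t+3) :=
      ⟨_, _, _, _, rfl, rfl, rfl, rfl⟩
    set T : Finset (ℕ × ℕ) :=
      (Finset.range I).biUnion
        (fun i => (Finset.Ico (2^(s+i)) (2^(s+i+1))) ×ˢ (Finset.range (2^(t-i)))) with hTdef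
    have hblock : ∀ p : ℕ × ℕ, p ∈ T → ∃ i, i < I ∧
        2^(s+i) ≤ p.1 ∧ p.1 < 2^(s+i+1) ∧ p.2 < 2^(t-i) := by
      rintro ⟨m, j⟩ hp
      rw [hTdef, Finset.mem_biUnion] at hp
      obtain ⟨i, hi, hmem⟩ := hp
      rw [Finset.mem_product, Finset.mem_Ico, Finset.mem_range] at hmem
      exact ⟨i, Finset.mem_range.mp hi, hmem.1.1, hmem.1.2, hmem.2⟩
    have hgood : ∀ p : ℕ × ℕ, p ∈ T →
        pts p.1 p.2 ∈ Dom ∧ f (pts p.1 p.2) ≤ N := by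
      rintro ⟨m, j⟩ hp
      obtain ⟨i, hiI, hm1, hm2, hj⟩ := hblock ⟨m, j⟩ hp
      have hit : i ≤ t := by omega
      have hm1R : ((2:ℝ))^(s+i) ≤ (m : ℝ) := by exact_mod_cast hm1
      have hm2R : (m : ℝ) ≤ (2:ℝ)^(s+i+1) := by exact_mod_cast le_of_lt hm2
      have hjR : (j : ℝ) + 1 ≤ (2:ℝ)^(t-i) := by exact_mod_cast Nat.succ_le_of_lt hj
      have hwub : w m j ≤ (2:ℝ)^(t-i) := le_trans (hw m j).2 hjR
      have hwn : 0 ≤ w m j := hwnn m j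
      have hone : (1:ℝ) ≤ (2:ℝ)^(t-i) := by
        have : (1:ℕ) ≤ 2^(t-i) := Nat.one_le_two_pow
        exact_mod_cast this
      have havail : ((j : ℝ) + 2) ≤ γ * m := by
        have e1 : ((j:ℝ) + 2) ≤ (2:ℝ)^(t-i) + 1 := by linarith
        have e3 : ((2:ℝ))^(t-i) ≤ (2:ℝ)^(t+i) :=
          pow_le_pow_right₀ (by norm_num) (by omega)
        have h2γ : (2:ℝ) ≤ γ * 2^u := by
          have := (div_le_iff₀ hγ).mp hγu
          linarith
        have e4 : γ * (2:ℝ)^(s+i) = (γ * 2^u) * (2:ℝ)^(t+i) := by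
          rw [hst, show (t + u + i) = u + (t + i) by omega, pow_add]
          ring
        have hp2 : (0:ℝ) < (2:ℝ)^(t+i) := by positivity
        have e5 : 2 * (2:ℝ)^(t+i) ≤ γ * (2:ℝ)^(s+i) := by
          rw [e4]
          nlinarith
        have e6 : γ * (2:ℝ)^(s+i) ≤ γ * m :=
          mul_le_mul_of_nonneg_left hm1R (le_of_lt hγ)
        nlinarith
      refine ⟨hdom m j havail, ?_⟩
      rw [hFval]
      have hstR : ((2:ℝ))^(t-i) * (2:ℝ)^(s+i+1) = (2:ℝ)^(s+t+1) := by
        rw [← pow_add]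
        congr 1
        omega
      have t1 : K * m * w m j ≤ (K' : ℝ) * 2^(s+t+1) := by
        have hmn : (0:ℝ) ≤ m := Nat.cast_nonneg m
        have hK'n : (0:ℝ) ≤ K' := Nat.cast_nonneg K'
        have h1 : K * m * w m j ≤ (K':ℝ) * m * w m j :=
          mul_le_mul_of_nonneg_right (mul_le_mul_of_nonneg_right hKK' hmn) hwn
        have h2 : (K':ℝ) * m * w m j ≤ (K':ℝ) * 2^(s+i+1) * 2^(t-i) := by
          have b1 : (K':ℝ) * m ≤ (K':ℝ) * 2^(s+i+1) := mul_le_mul_of_nonneg_left hm2R hK'n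
          exact mul_le_mul b1 hwub hwn (by positivity)
        calc K * m * w m j ≤ (K':ℝ) * 2^(s+i+1) * 2^(t-i) := le_trans h1 h2
          _ = (K':ℝ) * 2^(s+t+1) := by rw [mul_assoc, mul_comm ((2:ℝ)^(s+i+1)) _, hstR]
      have hwt : w m j ≤ (2:ℝ)^t :=
        le_trans hwub (pow_le_pow_right₀ (by norm_num) (by omega))
      have hpt : (0:ℝ) ≤ (2:ℝ)^t := by positivity
      have t2 : c' * (w m j)^2 ≤ (2:ℝ)^(s+t) := by
        have h1 : c' * (w m j)^2 ≤ |c'| * (w m j)^2 := by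
          nlinarith [le_abs_self c', sq_nonneg (w m j)]
        have hsq : (w m j)^2 ≤ (2:ℝ)^t * (2:ℝ)^t := by
          rw [sq]; exact mul_le_mul hwt hwt hwn hpt
        have h2 : |c'| * (w m j)^2 ≤ 2^u * ((2:ℝ)^t * (2:ℝ)^t) :=
          mul_le_mul hcu hsq (sq_nonneg _) (by positivity)
        have h4 : (2:ℝ)^u * ((2:ℝ)^t * (2:ℝ)^t) ≤ (2:ℝ)^(s+t) := by
          rw [← pow_add, ← pow_add]
          apply pow_le_pow_right₀ (by norm_num) (by omega)
        linarith
      have t3 : L * m ≤ 0 := mul_nonpos_of_nonpos_of_nonneg hL (Nat.cast_nonneg m)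
      have t4 : e' * w m j ≤ (2:ℝ)^(s+t) := by
        have h1 : e' * w m j ≤ |e'| * w m j := by
          nlinarith [le_abs_self e']
        have h2 : |e'| * w m j ≤ 2^u * (2:ℝ)^t :=
          mul_le_mul heu hwt hwn (by positivity)
        have h4 : (2:ℝ)^u * (2:ℝ)^t ≤ (2:ℝ)^(s+t) := by
          rw [← pow_add]
          apply pow_le_pow_right₀ (by norm_num) (by omega)
        linarith
      have t5 : g ≤ (2:ℝ)^(s+t) := by
        have h4 : (2:ℝ)^u ≤ (2:ℝ)^(s+t) :=
          pow_le_pow_right₀ (by norm_num) (by omega)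
        linarith [le_abs_self g]
      have hNR : (N : ℝ) = (K' : ℝ) * 2^(s+t+3) := by
        rw [hN]; push_cast; ring
      have hfin : (K':ℝ) * 2^(s+t+1) + 3 * 2^(s+t) ≤ (K':ℝ) * 2^(s+t+3) := by
        have hX : (0:ℝ) < (2:ℝ)^(s+t) := by positivity
        have hK'R : (1:ℝ) ≤ (K' : ℝ) := by exact_mod_cast hK'1
        have e1 : (2:ℝ)^(s+t+1) = 2 * (2:ℝ)^(s+t) := by rw [pow_succ]; ring
        have e3 : (2:ℝ)^(s+t+3) = 8 * (2:ℝ)^(s+t) := by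
          rw [show s+t+3 = (s+t)+3 by omega, pow_add]; ring
        rw [e1, e3]
        nlinarith
      rw [hNR]
      linarith
    have hdisj : ∀ i ∈ (Finset.range I), ∀ i' ∈ (Finset.range I), i ≠ i' →
        Disjoint ((Finset.Ico (2^(s+i)) (2^(s+i+1))) ×ˢ (Finset.range (2^(t-i))))
          ((Finset.Ico (2^(s+i')) (2^(s+i'+1))) ×ˢ (Finset.range (2^(t-i')))) := by
      intro i _ i' _ hne
      rw [Finset.disjoint_left]
      rintro ⟨m, j⟩ hp hp'
      rw [Finset.mem_product, Finset.mem_Ico, Finset.mem_range] at hp hp'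
      rcases Nat.lt_or_ge i i' with h | h
      · have : 2^(s+i+1) ≤ 2^(s+i') := Nat.pow_le_pow_right (by norm_num) (by omega)
        omega
      · have hlt : i' < i := by omega
        have : 2^(s+i'+1) ≤ 2^(s+i) := Nat.pow_le_pow_right (by norm_num) (by omega)
        omega
    have hcardT : T.card = I * 2^(s+t) := by
      rw [hTdef, Finset.card_biUnion hdisj]
      have hterm : ∀ i ∈ Finset.range I,
          ((Finset.Ico (2^(s+i)) (2^(s+i+1))) ×ˢ (Finset.range (2^(t-i)))).card = 2^(s+t) := by
        intro i hi
        have hiI : i < I := Finset.mem_range.mp hi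
        rw [Finset.card_product, Nat.card_Ico, Finset.card_range]
        have h3 : 2^(s+i+1) - 2^(s+i) = 2^(s+i) := by
          rw [pow_succ]; omega
        rw [h3, ← pow_add]
        congr 1
        omega
      rw [Finset.sum_congr rfl hterm, Finset.sum_const, Finset.card_range, smul_eq_mul]
    set S : Finset (ℝ × ℝ) := T.image (fun p => pts p.1 p.2) with hSdef
    have hcardS : S.card = T.card := by
      rw [hSdef]
      apply Finset.card_image_of_injOn
      rintro ⟨m, j⟩ _ ⟨m', j'⟩ _ he
      have := hptsinj m j m' j' he
      simp [this.1, this.2]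
    have hle := count_lemma f Dom hmap hinj S N (by
      intro z hz
      obtain ⟨p, hp, rfl⟩ := Finset.mem_image.mp hz
      exact hgood p hp)
    rw [hcardS, hcardT] at hle
    have hX1 : 1 ≤ 2^(s+t) := Nat.one_le_two_pow
    have hN8 : N = K' * (2^(s+t) * 8) := by
      rw [hN, show s+t+3 = (s+t)+3 by omega, pow_add]
      norm_num
    rw [hN8, hI16] at hle
    nlinarith [hle, hX1, hK'1]

set_option maxHeartbeats 2000000 in
/-- If `P` is a quadratic packing polynomial on `S(α)`, then every region
`R_n = {(x,y) ∈ S(α) : 0 ≤ P(x,y) ≤ n}` is bounded. -/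
theorem region_is_bounded
    (α : ℝ) (hα : 0 < α)
    (P : MvPolynomial (Fin 2) ℝ) (hdeg : P.totalDegree = 2)
    (f : ℝ × ℝ → ℝ) (hf : ∀ z : ℝ × ℝ, f z = MvPolynomial.eval ![z.1, z.2] P)
    (hpack : Set.BijOn f
        {z : ℝ × ℝ | (0 ≤ z.2 ∧ z.2 ≤ α * z.1) ∧ ∃ m n : ℤ, z.1 = m ∧ z.2 = n}
        {x : ℝ | ∃ k : ℕ, x = k}) :
    ∀ n : ℕ,
      Bornology.IsBounded
        {z : ℝ × ℝ | (0 ≤ z.2 ∧ z.2 ≤ α * z.1) ∧ 0 ≤ f z ∧ f z ≤ (n : ℝ)} := by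
  intro n
  classical
  set Dom : Set (ℝ × ℝ) :=
    {z : ℝ × ℝ | (0 ≤ z.2 ∧ z.2 ≤ α * z.1) ∧ ∃ m n : ℤ, z.1 = m ∧ z.2 = n} with hDom
  have hmap : ∀ z ∈ Dom, ∃ k : ℕ, f z = k := fun z hz => hpack.mapsTo hz
  have hinj : Set.InjOn f Dom := hpack.injOn
  set qa : ℝ := P.coeff (mono2 2 0) with hqa
  set qb : ℝ := P.coeff (mono2 1 1) with hqb
  set qc : ℝ := P.coeff (mono2 0 2) with hqc
  set qd : ℝ := P.coeff (mono2 1 0) with hqd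
  set qe : ℝ := P.coeff (mono2 0 1) with hqe
  set qg : ℝ := P.coeff (mono2 0 0) with hqg
  have hnz : ¬(qa = 0 ∧ qb = 0 ∧ qc = 0) := quad_nonzero P hdeg
  have hfF : ∀ z : ℝ × ℝ,
      f z = qa*z.1^2 + qb*(z.1*z.2) + qc*z.2^2 + qd*z.1 + qe*z.2 + qg := by
    intro z
    rw [hf z, quad_eval P (le_of_eq hdeg) z.1 z.2]
  -- nonnegativity of the quadratic part on directions of the sector
  have hφ0 : ∀ β : ℝ, 0 ≤ β → β ≤ α → 0 ≤ qa + qb*β + qc*β^2 := by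
    intro β hβ0 hβα
    by_contra hneg
    push_neg at hneg
    set A : ℝ := qa + qb*β + qc*β^2 with hA
    set B : ℝ := qb + 2*qc*β with hB
    set L : ℝ := qd + qe*β with hL
    set q : ℝ := |B| + |L| + |qc| + |qe| + |qg| with hq
    have hq0 : 0 ≤ q := by positivity
    set p : ℝ := -A with hp
    have hp0 : 0 < p := by simp [hp]; linarith
    set m : ℕ := ⌈(2*q+1)/p⌉₊ + 1 with hm
    have hm1 : (1:ℝ) ≤ m := by
      have : (1:ℕ) ≤ m := by omega
      exact_mod_cast this
    have hmq : 2*q + 1 ≤ p * m := by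
      have h1 : ((2*q+1)/p : ℝ) ≤ m := by
        calc ((2*q+1)/p : ℝ) ≤ ⌈(2*q+1)/p⌉₊ := Nat.le_ceil _
          _ ≤ m := by exact_mod_cast Nat.le_succ _
      calc 2*q+1 = ((2*q+1)/p) * p := by field_simp
        _ ≤ m * p := mul_le_mul_of_nonneg_right h1 (le_of_lt hp0)
        _ = p * m := by ring
    set y : ℤ := ⌊β*(m:ℝ)⌋ with hy
    set w₀ : ℝ := Int.fract (β*(m:ℝ)) with hw₀
    have hyw : (y:ℝ) = β*m - w₀ := by
      rw [hy, hw₀, Int.self_sub_fract]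
    have hw00 : 0 ≤ w₀ := Int.fract_nonneg _
    have hw01 : w₀ ≤ 1 := le_of_lt (Int.fract_lt_one _)
    have hmn : (0:ℝ) ≤ m := Nat.cast_nonneg m
    have hdomm : ((m:ℝ), (y:ℝ)) ∈ Dom := by
      refine ⟨⟨?_, ?_⟩, ⟨m, y, by push_cast; ring, rfl⟩⟩
      · simp only
        have : (0:ℤ) ≤ y := by
          rw [hy]
          exact Int.floor_nonneg.mpr (by positivity)
        exact_mod_cast this
      · simp only
        rw [hyw]
        have h1 : β*(m:ℝ) ≤ α*m := mul_le_mul_of_nonneg_right hβα hmn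
        linarith
    obtain ⟨k, hk⟩ := hmap _ hdomm
    have hfnn : 0 ≤ f ((m:ℝ), (y:ℝ)) := by
      rw [hk]; exact Nat.cast_nonneg k
    have hfexp : f ((m:ℝ), (y:ℝ)) =
        A*(m:ℝ)^2 - B*((m:ℝ)*w₀) + qc*w₀^2 + L*(m:ℝ) - qe*w₀ + qg := by
      rw [hfF]
      simp only
      rw [hyw, hA, hB, hL]
      ring
    rw [hfexp] at hfnn
    have e1 : -(B*((m:ℝ)*w₀)) ≤ |B| * (m:ℝ) := by
      have h1 : |B*((m:ℝ)*w₀)| ≤ |B| * (m:ℝ) := by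
        rw [abs_mul]
        apply mul_le_mul_of_nonneg_left _ (abs_nonneg B)
        rw [abs_of_nonneg (mul_nonneg hmn hw00)]
        exact mul_le_of_le_one_right hmn hw01
      linarith [neg_abs_le (B*((m:ℝ)*w₀))]
    have hw2 : w₀^2 ≤ 1 := by nlinarith
    have e2 : qc*w₀^2 ≤ |qc| := by
      nlinarith [le_abs_self qc, abs_nonneg qc, hw2, sq_nonneg w₀]
    have e3 : L*(m:ℝ) ≤ |L| * (m:ℝ) := by
      nlinarith [le_abs_self L]
    have e4 : -(qe*w₀) ≤ |qe| := by
      nlinarith [neg_abs_le qe, abs_nonneg qe]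
    have e5 : qg ≤ |qg| := le_abs_self qg
    -- 0 ≤ -p m² + q m + q, with p m ≥ 2q+1, m ≥ 1 : contradiction
    have hkey : (2*q+1)*(m:ℝ) ≤ p*(m:ℝ)^2 := by
      have := mul_le_mul_of_nonneg_right hmq hmn
      nlinarith
    have hqm : q ≤ q*(m:ℝ) := le_mul_of_one_le_right hq0 hm1
    have hrest : 0 ≤ (|qc| + |qe| + |qg|)*(m:ℝ) := by positivity
    have hAp : A = -p := by rw [hp]; ring
    rw [hAp] at hfnn
    have hqexp : q*(m:ℝ) = |B| * (m:ℝ) + |L| * (m:ℝ) + (|qc| + |qe| + |qg|)*(m:ℝ) := by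
      rw [hq]; ring
    have final1 : 0 ≤ -(p*(m:ℝ)^2) + q*(m:ℝ) + q := by
      have c1 : |B| * (m:ℝ) + |L| * (m:ℝ) ≤ q*(m:ℝ) := by linarith
      have c2 : |qc| + |qe| + |qg| ≤ q := by
        rw [hq]
        have := abs_nonneg B
        have := abs_nonneg L
        linarith
      linarith
    linarith [final1, hkey, hqm, hm1]
  -- main lemma : at zero directions the linear part is positive
  have hmain : ∀ β : ℝ, 0 ≤ β → β ≤ α → qa + qb*β + qc*β^2 = 0 →
      qd + qe*β ≤ 0 → False := by
    intro β hβ0 hβα hφβ hψβ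
    rcases eq_or_lt_of_le hβ0 with hb0 | hbpos
    · -- β = 0 : use points (m, j+1) above the lower edge
      have hβ : β = 0 := hb0.symm
      subst hβ
      have hqa0 : qa = 0 := by linarith [hφβ]
      have hψ0 : qd ≤ 0 := by linarith [hψβ]
      exact core_s11 f Dom hmap hinj qb qc qe qd qg α hα hψ0
        (fun m j => ((m:ℝ), (j:ℝ)+1)) (fun m j => (j:ℝ)+1)
        (fun m j => ⟨le_of_lt (lt_add_one (j:ℝ)), le_refl _⟩)
        (by
          intro m j hj
          refine ⟨⟨?_, ?_⟩, ⟨m, (j:ℤ)+1, by push_cast; ring, by push_cast; ring⟩⟩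
          · simp only; positivity
          · simp only; linarith)
        (by
          intro m j
          rw [hfF]
          simp only
          rw [hqa0]
          ring)
        (by
          intro m j m' j' he
          have h1 : (m:ℝ) = m' := congrArg Prod.fst he
          have h2 : (j:ℝ)+1 = (j':ℝ)+1 := congrArg Prod.snd he
          constructor
          · exact_mod_cast h1
          · have : (j:ℝ) = j' := by linarith
            exact_mod_cast this)
    · -- β > 0 : use points (m, ⌊βm⌋ - j) below the line y = βx
      exact core_s11 f Dom hmap hinj (-(qb + 2*qc*β)) qc (-qe) (qd + qe*β) qg β hbpos hψβ
        (fun m j => ((m:ℝ), ((⌊β*(m:ℝ)⌋ - j : ℤ):ℝ)))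
        (fun m j => Int.fract (β*(m:ℝ)) + j)
        (fun m j => ⟨by
            show (j:ℝ) ≤ Int.fract (β*(m:ℝ)) + j
            linarith [Int.fract_nonneg (β*(m:ℝ))], by
            show Int.fract (β*(m:ℝ)) + (j:ℝ) ≤ (j:ℝ) + 1
            linarith [le_of_lt (Int.fract_lt_one (β*(m:ℝ)))]⟩)
        (by
          intro m j hj
          have hfl : ((⌊β*(m:ℝ)⌋ : ℤ):ℝ) = β*m - Int.fract (β*(m:ℝ)) := by
            rw [Int.self_sub_fract]
          have hfr0 : 0 ≤ Int.fract (β*(m:ℝ)) := Int.fract_nonneg _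
          have hfr1 : Int.fract (β*(m:ℝ)) < 1 := Int.fract_lt_one _
          have hmn : (0:ℝ) ≤ m := Nat.cast_nonneg m
          refine ⟨⟨?_, ?_⟩, ⟨m, ⌊β*(m:ℝ)⌋ - j, by push_cast; ring, rfl⟩⟩
          · simp only
            push_cast
            rw [hfl]
            linarith
          · simp only
            push_cast
            rw [hfl]
            have h1 : β*(m:ℝ) ≤ α*m := mul_le_mul_of_nonneg_right hβα hmn
            linarith)
        (by
          intro m j
          have hfl : ((⌊β*(m:ℝ)⌋ : ℤ):ℝ) = β*m - Int.fract (β*(m:ℝ)) := by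
            rw [Int.self_sub_fract]
          rw [hfF]
          simp only
          push_cast
          rw [hfl]
          linear_combination ((m:ℝ)^2) * hφβ)
        (by
          intro m j m' j' he
          have h1 : (m:ℝ) = m' := congrArg Prod.fst he
          have hmm : m = m' := by exact_mod_cast h1
          subst hmm
          have h2 : ((⌊β*(m:ℝ)⌋ - j : ℤ):ℝ) = ((⌊β*(m:ℝ)⌋ - j' : ℤ):ℝ) := congrArg Prod.snd he
          have h3 : (⌊β*(m:ℝ)⌋ - j : ℤ) = (⌊β*(m:ℝ)⌋ - j' : ℤ) := by exact_mod_cast h2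
          exact ⟨rfl, by omega⟩)
  -- positivity of the max of quadratic and linear parts
  have hposmax : ∀ t' ∈ Set.Icc (0:ℝ) α,
      0 < max (qa + qb*t' + qc*t'^2) (qd + qe*t') := by
    intro t' ht'
    rcases lt_trichotomy (qa + qb*t' + qc*t'^2) 0 with h | h | h
    · exact absurd h (not_lt.mpr (hφ0 t' ht'.1 ht'.2))
    · refine lt_max_iff.mpr (Or.inr ?_)
      by_contra h'
      push_neg at h'
      exact hmain t' ht'.1 ht'.2 h h'
    · exact lt_max_iff.mpr (Or.inl h)
  -- compactness: uniform lower bound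
  have hcont : ContinuousOn (fun t' : ℝ => max (qa + qb*t' + qc*t'^2) (qd + qe*t'))
      (Set.Icc 0 α) := (Continuous.max (by continuity) (by continuity)).continuousOn
  obtain ⟨t₀, ht₀, hmin⟩ := isCompact_Icc.exists_isMinOn
    (Set.nonempty_Icc.mpr (le_of_lt hα)) hcont
  set ε : ℝ := max (qa + qb*t₀ + qc*t₀^2) (qd + qe*t₀) with hε'
  have hε : 0 < ε := hposmax t₀ ht₀
  set X : ℝ := (ε + |qd| + |qe| * α)/ε with hX
  have hX1 : 1 ≤ X := by
    rw [hX, le_div_iff₀ hε]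
    have : 0 ≤ |qd| + |qe| * α := by positivity
    linarith
  have hlow : ∀ x y : ℝ, 0 ≤ y → y ≤ α*x → X ≤ x → ε*x + qg ≤ f (x, y) := by
    intro x y hy hyx hXx
    have hx0 : 0 < x := lt_of_lt_of_le one_pos (le_trans hX1 hXx)
    set t' : ℝ := y/x with ht'
    have ht'0 : 0 ≤ t' := div_nonneg hy (le_of_lt hx0)
    have ht'α : t' ≤ α := by
      rw [ht', div_le_iff₀ hx0]
      linarith [hyx]
    have hyeq : y = t'*x := by
      rw [ht']
      field_simp
    have hfeq : f (x, y) = (qa + qb*t' + qc*t'^2)*x^2 + (qd + qe*t')*x + qg := by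
      rw [hfF]
      simp only
      rw [hyeq]
      ring
    have hφnn : 0 ≤ qa + qb*t' + qc*t'^2 := hφ0 t' ht'0 ht'α
    have hψlb : -(|qd| + |qe| * α) ≤ qd + qe*t' := by
      have h1 : |qe*t'| ≤ |qe| * α := by
        rw [abs_mul]
        apply mul_le_mul_of_nonneg_left _ (abs_nonneg qe)
        rw [abs_of_nonneg ht'0]
        exact ht'α
      have := neg_abs_le (qe*t')
      have := le_abs_self qd
      have := neg_abs_le qd
      linarith
    have hmax : ε ≤ max (qa + qb*t' + qc*t'^2) (qd + qe*t') :=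
      hmin ⟨ht'0, ht'α⟩
    rw [hfeq]
    rcases le_or_gt ε (qd + qe*t') with hc | hc
    · -- linear part at least ε
      have h1 : 0 ≤ (qa + qb*t' + qc*t'^2)*x^2 := by positivity
      nlinarith
    · -- quadratic part at least ε
      have hφε : ε ≤ qa + qb*t' + qc*t'^2 := by
        rcases max_cases (qa + qb*t' + qc*t'^2) (qd + qe*t') with ⟨he, _⟩ | ⟨he, _⟩
        · rw [he] at hmax; exact hmax
        · rw [he] at hmax; linarith
      have hXx' : (ε + |qd| + |qe| * α) ≤ ε * x := by
        rw [hX, div_le_iff₀ hε] at hXx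
        nlinarith
      -- ε x² + ψ x ≥ ε x  since x(εx + ψ - ε) ≥ 0
      have hq2 : ε*x^2 ≤ (qa + qb*t' + qc*t'^2)*x^2 :=
        mul_le_mul_of_nonneg_right hφε (sq_nonneg x)
      have h2 : 0 ≤ ε*x + (qd + qe*t') - ε := by linarith
      have h3 : 0 ≤ x*(ε*x + (qd + qe*t') - ε) := mul_nonneg (le_of_lt hx0) h2
      nlinarith [hq2, h3]
  -- conclusion : the region is contained in a closed ball
  set Xf : ℝ := max X (((n:ℝ) + 1 + |qg|)/ε) with hXf
  have hXf0 : 0 ≤ Xf := le_trans (by linarith) (le_max_left _ _)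
  apply Bornology.IsBounded.subset (Metric.isBounded_closedBall
    (x := ((0:ℝ), (0:ℝ))) (r := max Xf (α*Xf)))
  intro z hz
  obtain ⟨⟨hz1, hz2⟩, hz3, hz4⟩ := hz
  have hx0 : 0 ≤ z.1 := by nlinarith
  have hxXf : z.1 ≤ Xf := by
    by_contra hcon
    push_neg at hcon
    have hXz : X ≤ z.1 := le_of_lt (lt_of_le_of_lt (le_max_left _ _) hcon)
    have hlz := hlow z.1 z.2 hz1 hz2 hXz
    have hnz1 : ((n:ℝ) + 1 + |qg|)/ε < z.1 := lt_of_le_of_lt (le_max_right _ _) hcon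
    have hnz2 : (n:ℝ) + 1 + |qg| < ε * z.1 := by
      rw [div_lt_iff₀ hε] at hnz1
      linarith
    have habs : -qg ≤ |qg| := neg_le_abs qg
    have : ((n:ℝ)) < f (z.1, z.2) := by linarith
    rw [Prod.mk.eta] at this
    linarith
  have hyXf : z.2 ≤ α*Xf := le_trans hz2 (mul_le_mul_of_nonneg_left hxXf (le_of_lt hα))
  rw [Metric.mem_closedBall]
  rw [Prod.dist_eq]
  apply max_le
  · rw [Real.dist_eq, sub_zero, abs_of_nonneg hx0]
    exact le_trans hxXf (le_max_left _ _)
  · rw [Real.dist_eq, sub_zero, abs_of_nonneg hz1]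
    exact le_trans hyXf (le_max_right _ _)
end
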